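/- arXiv:2402.08830 — 9 statements merged into one kernel-verified Lean document; each statement's English description precedes it below -/
import Mathlib

section
/- Let G be an unweighted digraph (self-loops allowed) that is strongly connected. Then G admits a 2-realization; moreover, for any vertex v of G there exists a 2-realization of G whose first element is v, and there exists a 2-realization of G whose last element is v. -/
/-!
For window size 2 the arcs of the sequence digraph of `x` are exactly the pairs `[u, v]` occurring
as contiguous blocks of `x`, so a 2-realization is the same as a walk of the digraph containing
every vertex and every arc as a block. In a strongly connected digraph such a walk is built by
concatenation: from the current endpoint walk to the start of the next vertex or arc, traverse
it, and continue; finally walk to the prescribed endpoint.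
-/

/-- The sequence digraph of `x` with window size `w` has an arc `(u,v)` exactly when
there are positions `k < k' < k + w` with `x_k = u` and `x_{k'} = v`. -/
def seqArc {V : Type*} (w : ℕ) (x : List V) (u v : V) : Prop :=
  ∃ k k' : ℕ, k < k' ∧ k' < k + w ∧ x[k]? = some u ∧ x[k']? = some v

/-- `x` is a `w`-realization of the digraph on vertex set `V` (self-loops allowed)
with adjacency relation `Adj`. -/
def IsRealizationD {V : Type*} (w : ℕ) (Adj : V → V → Prop) (x : List V) : Prop :=
  x ≠ [] ∧ (∀ v : V, v ∈ x) ∧ ∀ u v : V, Adj u v ↔ seqArc w x u v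

theorem seqArc_two_iff_infix {V : Type*} {x : List V} {u v : V} :
    seqArc 2 x u v ↔ [u, v] <:+: x := by
  rw [List.infix_iff_getElem?]
  constructor
  · rintro ⟨k, k', hkk', hk', hu, hv⟩
    obtain rfl : k' = k + 1 := by omega
    have hlen := (List.getElem?_eq_some_iff.1 hv).1
    refine ⟨k, by simp; omega, fun i hi => ?_⟩
    simp only [List.length_cons, List.length_nil] at hi
    interval_cases i
    · simpa using hu
    · simpa [Nat.add_comm] using hv
  · rintro ⟨k, -, h⟩
    exact ⟨k, k + 1, by omega, by omega, by simpa using h 0, by simpa [Nat.add_comm] using h 1⟩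

namespace List

variable {α : Type*} {R : α → α → Prop}

def IsWalk (R : α → α → Prop) (l : List α) (a b : α) : Prop :=
  l.IsChain R ∧ l.head? = some a ∧ l.getLast? = some b

theorem exists_isWalk_of_reflTransGen {a b : α} (h : Relation.ReflTransGen R a b) :
    ∃ l, IsWalk R l a b := by
  obtain ⟨l, hchain, hlast⟩ := exists_isChain_cons_of_relationReflTransGen h
  exact ⟨a :: l, hchain, rfl, by rw [getLast?_eq_some_getLast (cons_ne_nil a l), hlast]⟩

theorem suffix_append_tail {p q : List α} {b : α} (hp : p.getLast? = some b)
    (hq : q.head? = some b) : q <:+ p ++ q.tail := by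
  obtain ⟨t, rfl⟩ : ∃ t, q = b :: t := by
    cases q <;> simp_all
  rw [← dropLast_append_getLast? b hp]
  exact ⟨p.dropLast, by simp⟩

theorem IsWalk.append_tail {p q : List α} {a b c : α} (hp : IsWalk R p a b)
    (hq : IsWalk R q b c) : IsWalk R (p ++ q.tail) a c := by
  obtain ⟨hpc, hph, hpl⟩ := hp
  obtain ⟨t, rfl⟩ : ∃ t, q = b :: t := by
    cases q <;> simp_all [IsWalk]
  obtain ⟨hqc, -, hql⟩ := hq
  refine ⟨hpc.append hqc.tail ?_, ?_, ?_⟩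
  · simpa [hpl] using hqc.rel_head?
  · simp [head?_append, hph]
  · cases t with
    | nil => simpa [← hql] using hpl
    | cons d t => simpa [getLast?_append] using hql

theorem exists_isWalk_forall_infix (hR : ∀ u v, Relation.ReflTransGen R u v)
    (S : List (List α)) (hS : ∀ s ∈ S, ∃ u v, IsWalk R s u v) (a b : α) :
    ∃ x, IsWalk R x a b ∧ ∀ s ∈ S, s <:+: x := by
  induction S generalizing a with
  | nil => simpa using exists_isWalk_of_reflTransGen (hR a b)
  | cons s S ih =>
    obtain ⟨u, v, hs⟩ := hS s mem_cons_self
    obtain ⟨p, hp⟩ := exists_isWalk_of_reflTransGen (hR a u)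
    obtain ⟨r, hr, hrS⟩ := ih (fun s' hs' => hS s' (mem_cons_of_mem s hs')) v
    have hsr : r <:+ s ++ r.tail := suffix_append_tail hs.2.2 hr.2.1
    have hx : s ++ r.tail <:+ p ++ (s ++ r.tail).tail :=
      suffix_append_tail hp.2.2 (by simp [head?_append, hs.2.1])
    refine ⟨_, hp.append_tail (hs.append_tail hr), ?_⟩
    rintro s' (_ | ⟨_, hs'⟩)
    · exact (prefix_append s r.tail).isInfix.trans hx.isInfix
    · exact (hrS s' hs').trans (hsr.trans hx).isInfix

end List

theorem isRealizationD_two_of_isWalk {V : Type*} {Adj : V → V → Prop} {x : List V} {a b : V}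
    (hx : x.IsWalk Adj a b) (hV : ∀ v, [v] <:+: x) (hAdj : ∀ u v, Adj u v → [u, v] <:+: x) :
    IsRealizationD 2 Adj x := by
  refine ⟨by rintro rfl; simp [List.IsWalk] at hx, fun v => (List.singleton_infix_iff v x).1 (hV v),
    fun u v => ?_⟩
  rw [seqArc_two_iff_infix]
  exact ⟨hAdj u v, fun h => List.isChain_pair.1 (hx.1.infix h)⟩

theorem exists_isRealizationD_two_head?_getLast? {V : Type*} [Fintype V] (Adj : V → V → Prop)
    (hsc : ∀ u v : V, Relation.ReflTransGen Adj u v) (a b : V) :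
    ∃ x : List V, IsRealizationD 2 Adj x ∧ x.head? = some a ∧ x.getLast? = some b := by
  classical
  let arcs : List (V × V) := (Finset.univ.filter fun e : V × V => Adj e.1 e.2).toList
  let S := (Finset.univ : Finset V).toList.map (fun v => [v]) ++ arcs.map (fun e => [e.1, e.2])
  have hS : ∀ s ∈ S, ∃ u v, s.IsWalk Adj u v := by
    simp only [S, arcs, List.mem_append, List.mem_map]
    rintro s (⟨v, -, rfl⟩ | ⟨e, he, rfl⟩)
    · exact ⟨v, v, List.isChain_singleton v, rfl, rfl⟩
    · simp only [Finset.mem_toList, Finset.mem_filter, Finset.mem_univ, true_and] at he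
      exact ⟨e.1, e.2, List.isChain_pair.2 he, rfl, rfl⟩
  obtain ⟨x, hx, hxS⟩ := List.exists_isWalk_forall_infix hsc S hS a b
  refine ⟨x, isRealizationD_two_of_isWalk hx (fun v => hxS _ ?_) (fun u v h => hxS _ ?_), hx.2⟩
  · simp [S]
  · simp [S, arcs, h]

theorem stmt1 {V : Type*} [Fintype V] [Nonempty V] (Adj : V → V → Prop)
    (hsc : ∀ u v : V, Relation.ReflTransGen Adj u v) :
    (∃ x : List V, IsRealizationD 2 Adj x) ∧
    (∀ v : V, ∃ x : List V, IsRealizationD 2 Adj x ∧ x.head? = some v) ∧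
    (∀ v : V, ∃ x : List V, IsRealizationD 2 Adj x ∧ x.getLast? = some v) := by
  have h := exists_isRealizationD_two_head?_getLast? Adj hsc
  obtain ⟨v₀⟩ := ‹Nonempty V›
  exact ⟨(h v₀ v₀).imp fun _ hx => hx.1, fun v => (h v v).imp fun _ hx => ⟨hx.1, hx.2.1⟩,
    fun v => (h v v).imp fun _ hx => ⟨hx.1, hx.2.2⟩⟩
end

section
/- Let G = (V,E) be an unweighted directed acyclic graph (no directed cycles, in particular no self-loops). Then G is a 2-sequence graph (i.e., admits a 2-realization) if and only if G is a directed path, that is, its vertices can be ordered v_1,…,v_n so that the arc set is exactly {(v_i, v_{i+1}) : 1 ≤ i < n}. Moreover, in that case G has exactly one 2-realization, namely the sequence v_1 v_2 … v_n. -/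
/-- `l` is an ordering `v_1, …, v_n` of all the vertices (without repetition) such that the
arcs of the digraph are exactly the pairs `(v_i, v_{i+1})`, i.e. the digraph is the directed
path `v_1 → v_2 → ⋯ → v_n`. -/
def IsDirPathList {V : Type*} (Adj : V → V → Prop) (l : List V) : Prop :=
  l.Nodup ∧ (∀ v : V, v ∈ l) ∧
    ∀ u v : V, Adj u v ↔ ∃ k : ℕ, l[k]? = some u ∧ l[k + 1]? = some v

/-!
Every arc of a 2-realization `x` joins consecutive entries of `x`, so a repeated vertex of `x`
would close a directed cycle; hence for an acyclic digraph a 2-realization lists each vertex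
exactly once, and it is then a directed-path ordering. Two repetition-free lists with the same
entries and the same consecutive pairs coincide: their first entries are the unique entries
without a predecessor, and each further entry is the successor of the previous one.
-/

namespace List

variable {α : Type*}

def Consecutive (l : List α) (u v : α) : Prop :=
  ∃ k : ℕ, l[k]? = some u ∧ l[k + 1]? = some v

theorem isChain_of_consecutive {R : α → α → Prop} {l : List α}
    (h : ∀ u v, l.Consecutive u v → R u v) : l.IsChain R :=
  isChain_iff_getElem.2 fun i hi =>
    h _ _ ⟨i, getElem?_eq_getElem (by omega), getElem?_eq_getElem hi⟩

theorem nodup_of_isChain_of_acyclic {R : α → α → Prop} {l : List α} (hc : l.IsChain R)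
    (hR : ∀ v, ¬ Relation.TransGen R v v) : l.Nodup :=
  nodup_iff_pairwise_ne.2 <|
    (hc.imp fun _ _ => Relation.TransGen.single).pairwise.imp fun h => by rintro rfl; exact hR _ h

section EqOfConsecutive

variable {x l : List α}

theorem getElem?_zero_eq_some_of_consecutive (hx : x.Nodup) (hmem : ∀ v ∈ x, v ∈ l)
    (hcons : ∀ u v, l.Consecutive u v → x.Consecutive u v) {a : α} (ha : x[0]? = some a) :
    l[0]? = some a := by
  obtain ⟨j, hj⟩ := mem_iff_getElem?.1 (hmem a (mem_of_getElem? ha))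
  rcases j with _ | i
  · exact hj
  · have hi : i < l.length := by
      have := (getElem?_eq_some_iff.1 hj).1
      omega
    obtain ⟨m, -, hm⟩ := hcons _ _ ⟨i, getElem?_eq_getElem hi, hj⟩
    have hx0 : 0 < x.length := (getElem?_eq_some_iff.1 ha).1
    exact absurd ((getElem?_inj hx0 hx).1 (ha.trans hm.symm)) (by omega)

theorem getElem?_succ_eq_some_of_consecutive (hl : l.Nodup)
    (hcons : ∀ u v, x.Consecutive u v → l.Consecutive u v) {k : ℕ} (hk : x[k]? = l[k]?)
    {b : α} (hb : x[k + 1]? = some b) : l[k + 1]? = some b := by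
  have hkx : k < x.length := by
    have := (getElem?_eq_some_iff.1 hb).1
    omega
  have hxk : x[k]? = some x[k] := getElem?_eq_getElem hkx
  obtain ⟨m, hm, hmb⟩ := hcons _ _ ⟨k, hxk, hb⟩
  have hml : m < l.length := (getElem?_eq_some_iff.1 hm).1
  rwa [(getElem?_inj hml hl).1 (hm.trans (hk ▸ hxk).symm)] at hmb

theorem eq_of_nodup_of_consecutive_iff (hx : x.Nodup) (hl : l.Nodup)
    (hmem : ∀ v, v ∈ x ↔ v ∈ l) (hcons : ∀ u v, x.Consecutive u v ↔ l.Consecutive u v) :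
    x = l := by
  refine ext_getElem? fun k => ?_
  induction k with
  | zero =>
    exact Option.ext fun a =>
      ⟨getElem?_zero_eq_some_of_consecutive hx (fun v => (hmem v).1) (fun u v => (hcons u v).2),
        getElem?_zero_eq_some_of_consecutive hl (fun v => (hmem v).2) (fun u v => (hcons u v).1)⟩
  | succ k ih =>
    exact Option.ext fun b =>
      ⟨getElem?_succ_eq_some_of_consecutive hl (fun u v => (hcons u v).1) ih,
        getElem?_succ_eq_some_of_consecutive hx (fun u v => (hcons u v).2) ih.symm⟩

end EqOfConsecutive

end List

section Realization

variable {V : Type*} {Adj : V → V → Prop}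

theorem seqArc_two_iff_consecutive (x : List V) (u v : V) :
    seqArc 2 x u v ↔ x.Consecutive u v := by
  constructor
  · rintro ⟨k, k', hkk', hk'k, hu, hv⟩
    obtain rfl : k' = k + 1 := by omega
    exact ⟨k, hu, hv⟩
  · rintro ⟨k, hu, hv⟩
    exact ⟨k, k + 1, by omega, by omega, hu, hv⟩

theorem IsRealizationD.isDirPathList (hdag : ∀ v : V, ¬ Relation.TransGen Adj v v)
    {x : List V} (hx : IsRealizationD 2 Adj x) : IsDirPathList Adj x := by
  have hcons u v : Adj u v ↔ x.Consecutive u v :=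
    (hx.2.2 u v).trans (seqArc_two_iff_consecutive x u v)
  have hchain : x.IsChain Adj := List.isChain_of_consecutive fun u v => (hcons u v).2
  exact ⟨List.nodup_of_isChain_of_acyclic hchain hdag, hx.2.1, hcons⟩

theorem IsDirPathList.isRealizationD [Nonempty V] {l : List V} (hl : IsDirPathList Adj l) :
    IsRealizationD 2 Adj l :=
  ⟨List.ne_nil_of_mem (hl.2.1 (Classical.arbitrary V)), hl.2.1,
    fun u v => (hl.2.2 u v).trans (seqArc_two_iff_consecutive l u v).symm⟩

theorem IsDirPathList.eq {x l : List V} (hx : IsDirPathList Adj x) (hl : IsDirPathList Adj l) :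
    x = l :=
  List.eq_of_nodup_of_consecutive_iff hx.1 hl.1 (fun v => iff_of_true (hx.2.1 v) (hl.2.1 v))
    fun u v => (hx.2.2 u v).symm.trans (hl.2.2 u v)

end Realization

theorem stmt2_general {V : Type*} [Nonempty V] (Adj : V → V → Prop)
    (hdag : ∀ v : V, ¬ Relation.TransGen Adj v v) :
    ((∃ x : List V, IsRealizationD 2 Adj x) ↔ ∃ l : List V, IsDirPathList Adj l) ∧
    (∀ l : List V, IsDirPathList Adj l →
      ∀ x : List V, IsRealizationD 2 Adj x ↔ x = l) :=
  ⟨⟨fun ⟨x, hx⟩ => ⟨x, hx.isDirPathList hdag⟩, fun ⟨l, hl⟩ => ⟨l, hl.isRealizationD⟩⟩,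
    fun _ hl _ =>
      ⟨fun hx => (hx.isDirPathList hdag).eq hl, fun h => h ▸ hl.isRealizationD⟩⟩

theorem stmt2 {V : Type*} [Fintype V] [Nonempty V] (Adj : V → V → Prop)
    (hdag : ∀ v : V, ¬ Relation.TransGen Adj v v) :
    ((∃ x : List V, IsRealizationD 2 Adj x) ↔ ∃ l : List V, IsDirPathList Adj l) ∧
    (∀ l : List V, IsDirPathList Adj l →
      ∀ x : List V, IsRealizationD 2 Adj x ↔ x = l) :=
  stmt2_general Adj hdag
end

section
/- Let G = (V,E) be an unweighted digraph. Then G is a 2-sequence graph (i.e., admits a 2-realization) if and only if G is a simple step graph, that is: the strongly connected components of G can be linearly ordered C_1,…,C_m so that the arcs of the condensation R(G) are exactly (C_i, C_{i+1}) for 1 ≤ i < m, and for each 1 ≤ i < m there is exactly one arc (u,v) of G with u ∈ C_i and v ∈ C_{i+1}. -/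
/-- Two vertices are equivalent when each is reachable from the other:
the classes are the strongly connected components of the digraph. -/
def sccSetoid {V : Type*} (Adj : V → V → Prop) : Setoid V where
  r u v := Relation.ReflTransGen Adj u v ∧ Relation.ReflTransGen Adj v u
  iseqv := ⟨fun _ => ⟨Relation.ReflTransGen.refl, Relation.ReflTransGen.refl⟩,
    fun h => ⟨h.2, h.1⟩, fun h1 h2 => ⟨h1.1.trans h2.1, h2.2.trans h1.2⟩⟩

/-- Adjacency of the condensation `R(G)`: its vertices are the strongly connected
components of `G`, with an arc `(C, C')` exactly when `C ≠ C'` and some arc of `G`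
goes from `C` to `C'`. -/
def condAdj {V : Type*} (Adj : V → V → Prop) :
    Quotient (sccSetoid Adj) → Quotient (sccSetoid Adj) → Prop := fun C C' =>
  C ≠ C' ∧ ∃ u v : V, Adj u v ∧
    Quotient.mk (sccSetoid Adj) u = C ∧ Quotient.mk (sccSetoid Adj) v = C'

/-- `G` is a simple step graph: its strongly connected components can be linearly ordered
`C_1, …, C_m` so that the arcs of the condensation are exactly the `(C_i, C_{i+1})`, and for
each `i` there is exactly one arc of `G` from `C_i` to `C_{i+1}`. -/
def IsSimpleStep {V : Type*} (Adj : V → V → Prop) : Prop :=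
  ∃ L : List (Quotient (sccSetoid Adj)),
    L.Nodup ∧ (∀ C : Quotient (sccSetoid Adj), C ∈ L) ∧
    (∀ C C' : Quotient (sccSetoid Adj),
      condAdj Adj C C' ↔ ∃ k : ℕ, L[k]? = some C ∧ L[k + 1]? = some C') ∧
    (∀ (k : ℕ) (C C' : Quotient (sccSetoid Adj)), L[k]? = some C → L[k + 1]? = some C' →
      ∃! e : V × V, Adj e.1 e.2 ∧
        Quotient.mk (sccSetoid Adj) e.1 = C ∧ Quotient.mk (sccSetoid Adj) e.2 = C')

/-! A realization is a walk that uses exactly the arcs of `G`. Along it the strongly connected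
components are met in reachability order, each in one contiguous block, so collapsing repeated
components gives the linear order `C_1, …, C_m`, and an arc from `C_i` to `C_{i+1}` can only be
the single step where one block passes to the next.
Conversely, list for each component its vertices and internal arcs, followed by its unique arc
to the next component. Consecutive entries of the concatenation are connected by reachability,
and joining them by walks, using the arc itself whenever two consecutive entries form one, gives
a realization. -/

open List Relation

namespace List

variable {α : Type*}

theorem pair_infix_iff_getElem? {a b : α} {l : List α} :
    [a, b] <:+: l ↔ ∃ k : ℕ, l[k]? = some a ∧ l[k + 1]? = some b := by
  rw [infix_iff_getElem?]
  constructor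
  · rintro ⟨k, -, h⟩
    exact ⟨k, by simpa using h 0 (by simp), by simpa [Nat.add_comm] using h 1 (by simp)⟩
  · rintro ⟨k, ha, hb⟩
    refine ⟨k, ?_, fun i hi => ?_⟩
    · have := (getElem?_eq_some_iff.1 hb).1
      simp only [length_cons, length_nil]
      omega
    · simp only [length_cons, length_nil] at hi
      interval_cases i <;> simp_all [Nat.add_comm]

theorem isChain_iff_forall_pair_infix {R : α → α → Prop} {l : List α} :
    IsChain R l ↔ ∀ a b, [a, b] <:+: l → R a b := by
  rw [isChain_iff_forall_rel_of_append_cons_cons]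
  constructor
  · rintro h a b ⟨s, t, rfl⟩
    exact h (l₁ := s) (l₂ := t) (by simp)
  · rintro h a b s t rfl
    exact h a b ⟨s, t, by simp⟩

theorem exists_pair_infix_of_pair_infix_map {β : Type*} {f : α → β} {l : List α} {c d : β}
    (h : [c, d] <:+: l.map f) : ∃ a b, [a, b] <:+: l ∧ f a = c ∧ f b = d := by
  obtain ⟨l', hl', hcd⟩ := infix_map_iff.1 h
  match l', hcd with
  | [a, b], hcd =>
    simp only [map_cons, map_nil, cons.injEq] at hcd
    exact ⟨a, b, hl', hcd.1.symm, hcd.2.1.symm⟩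

theorem exists_destutter'_eq_cons (R : α → α → Prop) [DecidableRel R] (a : α) (l : List α) :
    ∃ t, l.destutter' R a = a :: t := by
  induction l with
  | nil => exact ⟨[], rfl⟩
  | cons b l ih =>
    by_cases h : R a b
    · exact ⟨_, destutter'_cons_pos l h⟩
    · rwa [destutter'_cons_neg l h]

theorem pair_infix_destutter'_iff [DecidableEq α] {a b : α} (hab : a ≠ b) (c : α)
    (l : List α) :
    [a, b] <:+: l.destutter' (· ≠ ·) c ↔ [a, b] <:+: c :: l := by
  induction l generalizing c with
  | nil => rfl
  | cons d l ih =>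
    by_cases hcd : c = d
    · subst hcd
      rw [destutter'_cons_neg l (not_not_intro rfl), ih, infix_cons_iff (l₂ := c :: l)]
      simpa using fun (hac : a = c) (hbc : b = c) => absurd (hac.trans hbc.symm) hab
    · obtain ⟨t, ht⟩ := exists_destutter'_eq_cons (· ≠ ·) d l
      rw [destutter'_cons_pos l hcd, infix_cons_iff, infix_cons_iff (l₂ := d :: l), ← ih, ht]
      simp

theorem pair_infix_destutter_iff [DecidableEq α] {a b : α} (hab : a ≠ b) {l : List α} :
    [a, b] <:+: l.destutter (· ≠ ·) ↔ [a, b] <:+: l := by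
  cases l with
  | nil => simp
  | cons c l => exact pair_infix_destutter'_iff hab c l

theorem Nodup.eq_of_pair_infix {l : List α} (hl : l.Nodup) {a b c : α}
    (hb : [a, b] <:+: l) (hc : [a, c] <:+: l) : b = c := by
  induction l with
  | nil => simp at hb
  | cons x t ih =>
    rw [nodup_cons] at hl
    rw [infix_cons_iff] at hb hc
    rcases hb with hb | hb <;> rcases hc with hc | hc
    · rcases t with _ | ⟨y, t⟩ <;> simp_all
    · exact absurd (hc.subset (by simp [(cons_prefix_cons.1 hb).1])) hl.1
    · exact absurd (hb.subset (by simp [(cons_prefix_cons.1 hc).1])) hl.1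
    · exact ih hl.2 hb hc

theorem Pairwise.eq_of_pair_infix {r : α → α → Prop} [Std.Refl r] {l : List α}
    (hl : l.Pairwise r) {a b a' b' : α} (h : [a, b] <:+: l) (h' : [a', b'] <:+: l)
    (hba' : ¬ r b a') (hb'a : ¬ r b' a) : a = a' ∧ b = b' := by
  induction l with
  | nil => simp at h
  | cons x t ih =>
    rw [pairwise_cons] at hl
    rw [infix_cons_iff, cons_prefix_cons] at h h'
    rcases h with h | h <;> rcases h' with h' | h'
    · rcases t with _ | ⟨y, t⟩ <;> simp_all
    · obtain ⟨s, rfl⟩ := h.2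
      refine absurd ?_ hba'
      rcases mem_cons.1 (h'.subset (by simp) : a' ∈ b :: s) with rfl | ha'
      · exact refl_of r _
      · exact rel_of_pairwise_cons hl.2 ha'
    · obtain ⟨s, rfl⟩ := h'.2
      refine absurd ?_ hb'a
      rcases mem_cons.1 (h.subset (by simp) : a ∈ b' :: s) with rfl | ha
      · exact refl_of r _
      · exact rel_of_pairwise_cons hl.2 ha
    · exact ih hl.2 h h'

theorem pair_infix_flatMap_of_mem {β : Type*} {l : List (β × β)} {e : β × β} (h : e ∈ l) :
    [e.1, e.2] <:+: l.flatMap fun e => [e.1, e.2] :=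
  infix_of_mem_flatten (mem_map_of_mem h)

theorem exists_isChain_cons_getLast_eq_of_reflTransGen {r : α → α → Prop} {a b : α}
    (h : ReflTransGen r a b) :
    ∃ c, IsChain r (a :: c) ∧ (a :: c).getLast (cons_ne_nil a c) = b ∧
      (r a b → c = [b]) := by
  by_cases hab : r a b
  · exact ⟨[b], .cons_cons hab (.singleton b), rfl, fun _ => rfl⟩
  · obtain ⟨c, hc, hcb⟩ := exists_isChain_cons_of_relationReflTransGen h
    exact ⟨c, hc, hcb, fun h' => absurd h' hab⟩

theorem exists_isChain_of_isChain_reflTransGen {r : α → α → Prop} :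
    ∀ {P : List α}, IsChain (ReflTransGen r) P → ∃ W : List α, W.head? = P.head? ∧
      IsChain r W ∧ P ⊆ W ∧ ∀ a b, r a b → [a, b] <:+: P → [a, b] <:+: W
  | [], _ => ⟨[], rfl, .nil, by simp⟩
  | [a], _ => ⟨[a], rfl, .singleton a, by simp⟩
  | a :: b :: t, hP => by
    obtain ⟨hab, ht⟩ := isChain_cons_cons.1 hP
    obtain ⟨W, hW, hWchain, hWsub, hWinf⟩ := exists_isChain_of_isChain_reflTransGen ht
    obtain ⟨W, rfl⟩ : ∃ W', W = b :: W' := by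
      cases W with
      | nil => simp at hW
      | cons c W => exact ⟨W, by simpa using hW⟩
    obtain ⟨c, hc, hcb, hdirect⟩ := exists_isChain_cons_getLast_eq_of_reflTransGen hab
    have hsplit : a :: c ++ W = (a :: c).dropLast ++ b :: W := by
      conv_lhs => rw [← dropLast_append_getLast (cons_ne_nil a c), hcb]
      simp
    refine ⟨a :: c ++ W, rfl, ?_, ?_, ?_⟩
    · refine isChain_append.2 ⟨hc, hWchain.tail, fun x hx y hy => ?_⟩
      rw [getLast?_eq_some_getLast (cons_ne_nil a c), hcb, Option.mem_some_iff] at hx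
      subst hx
      exact (isChain_cons.1 hWchain).1 y hy
    · refine cons_subset.2 ⟨mem_cons_self, ?_⟩
      rw [hsplit]
      exact Subset.trans hWsub (subset_append_right _ _)
    · intro x y hxy h
      rw [infix_cons_iff, cons_prefix_cons] at h
      rcases h with ⟨rfl, hy⟩ | h
      · obtain rfl : y = b := by simpa using hy
        rw [hdirect hxy]
        exact (prefix_append [x, y] W).isInfix
      · rw [hsplit]
        exact (hWinf x y hxy h).trans (suffix_append _ _).isInfix

end List

section Digraph

variable {V : Type*} {Adj : V → V → Prop}

theorem seqArc_two_iff {x : List V} {u v : V} : seqArc 2 x u v ↔ [u, v] <:+: x := by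
  rw [pair_infix_iff_getElem?]
  constructor
  · rintro ⟨k, k', hk, hk', hu, hv⟩
    obtain rfl : k' = k + 1 := by omega
    exact ⟨k, hu, hv⟩
  · rintro ⟨k, hu, hv⟩
    exact ⟨k, k + 1, by omega, by omega, hu, hv⟩

theorem sccSetoid_mk_eq_iff {u v : V} :
    Quotient.mk (sccSetoid Adj) u = Quotient.mk _ v ↔
      ReflTransGen Adj u v ∧ ReflTransGen Adj v u :=
  Quotient.eq

theorem reflTransGen_of_condAdj {a b : V}
    (h : condAdj Adj (Quotient.mk _ a) (Quotient.mk _ b)) : ReflTransGen Adj a b := by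
  obtain ⟨-, u, v, huv, hu, hv⟩ := h
  exact (sccSetoid_mk_eq_iff.1 hu.symm).1.trans
    (ReflTransGen.head huv (sccSetoid_mk_eq_iff.1 hv).1)

theorem isChain_reflTransGen_of_forall_mk_eq {C : Quotient (sccSetoid Adj)} {l : List V}
    (h : ∀ a ∈ l, Quotient.mk _ a = C) : IsChain (ReflTransGen Adj) l :=
  (pairwise_of_forall_mem_list fun a ha b hb =>
    (sccSetoid_mk_eq_iff.1 ((h a ha).trans (h b hb).symm)).1).isChain

def sccReach (Adj : V → V → Prop) :
    Quotient (sccSetoid Adj) → Quotient (sccSetoid Adj) → Prop :=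
  Quotient.lift₂ (ReflTransGen Adj) fun _ _ _ _ hu hv =>
    propext ⟨fun h => hu.2.trans (h.trans hv.1), fun h => hu.1.trans (h.trans hv.2)⟩

instance : Std.Antisymm (sccReach Adj) where
  antisymm C D := Quotient.inductionOn₂ C D fun _ _ huv hvu => Quotient.sound ⟨huv, hvu⟩

structure IsStepOrder (Adj : V → V → Prop) (L : List (Quotient (sccSetoid Adj))) : Prop where
  nodup : L.Nodup
  mem : ∀ C, C ∈ L
  condAdj_iff : ∀ {C C'}, condAdj Adj C C' ↔ [C, C'] <:+: L
  existsUnique_arc : ∀ {C C'}, [C, C'] <:+: L →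
    ∃! e : V × V, Adj e.1 e.2 ∧ Quotient.mk _ e.1 = C ∧ Quotient.mk _ e.2 = C'

theorem isSimpleStep_iff : IsSimpleStep Adj ↔ ∃ L, IsStepOrder Adj L := by
  simp only [IsSimpleStep, ← pair_infix_iff_getElem?]
  constructor
  · rintro ⟨L, hnd, hmem, hcond, huniq⟩
    refine ⟨L, hnd, hmem, hcond _ _, fun h => ?_⟩
    obtain ⟨k, h1, h2⟩ := pair_infix_iff_getElem?.1 h
    exact huniq k _ _ h1 h2
  · rintro ⟨L, hL⟩
    exact ⟨L, hL.nodup, hL.mem, fun _ _ => hL.condAdj_iff, fun k _ _ h1 h2 =>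
      hL.existsUnique_arc (pair_infix_iff_getElem?.2 ⟨k, h1, h2⟩)⟩

theorem IsStepOrder.eq_of_condAdj {L : List (Quotient (sccSetoid Adj))} (hL : IsStepOrder Adj L)
    {C D D' : Quotient (sccSetoid Adj)} (hCD : [C, D] <:+: L) (h : condAdj Adj C D') : D' = D :=
  hL.nodup.eq_of_pair_infix (hL.condAdj_iff.1 h) hCD

section Realization

variable {x : List V}

theorem IsRealizationD.adj_iff (hx : IsRealizationD 2 Adj x) {u v : V} :
    Adj u v ↔ [u, v] <:+: x :=
  (hx.2.2 u v).trans seqArc_two_iff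

theorem IsRealizationD.pairwise_reflTransGen (hx : IsRealizationD 2 Adj x) :
    x.Pairwise (ReflTransGen Adj) :=
  (isChain_iff_forall_pair_infix.2 fun _ _ h => ReflTransGen.single (hx.adj_iff.2 h)).pairwise

theorem IsRealizationD.eq_of_adj (hx : IsRealizationD 2 Adj x) {u v u' v' : V}
    (huv : Adj u v) (hu'v' : Adj u' v') (hu : Quotient.mk (sccSetoid Adj) u = Quotient.mk _ u')
    (hv : Quotient.mk (sccSetoid Adj) v = Quotient.mk _ v')
    (hne : Quotient.mk (sccSetoid Adj) u ≠ Quotient.mk _ v) : u = u' ∧ v = v' := by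
  have hu := sccSetoid_mk_eq_iff.1 hu
  have hv := sccSetoid_mk_eq_iff.1 hv
  refine hx.pairwise_reflTransGen.eq_of_pair_infix (hx.adj_iff.1 huv) (hx.adj_iff.1 hu'v')
    (fun h => hne ?_) (fun h => hne ?_)
  · exact sccSetoid_mk_eq_iff.2 ⟨.single huv, h.trans hu.2⟩
  · exact sccSetoid_mk_eq_iff.2 ⟨.single huv, hv.1.trans h⟩

variable [DecidableEq (Quotient (sccSetoid Adj))]

theorem IsRealizationD.condAdj_iff (hx : IsRealizationD 2 Adj x)
    {C C' : Quotient (sccSetoid Adj)} :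
    condAdj Adj C C' ↔ [C, C'] <:+: (x.map (Quotient.mk _)).destutter (· ≠ ·) := by
  constructor
  · rintro ⟨hne, u, v, huv, rfl, rfl⟩
    exact (pair_infix_destutter_iff hne).2 ((hx.adj_iff.1 huv).map _)
  · intro h
    have hne : C ≠ C' := isChain_iff_forall_pair_infix.1 (isChain_destutter _ _) C C' h
    obtain ⟨u, v, huv, rfl, rfl⟩ :=
      exists_pair_infix_of_pair_infix_map ((pair_infix_destutter_iff hne).1 h)
    exact ⟨hne, u, v, hx.adj_iff.2 huv, rfl, rfl⟩

theorem IsRealizationD.isStepOrder (hx : IsRealizationD 2 Adj x) :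
    IsStepOrder Adj ((x.map (Quotient.mk _)).destutter (· ≠ ·)) := by
  have hdedup : (x.map (Quotient.mk _)).destutter (· ≠ ·) = (x.map (Quotient.mk _)).dedup :=
    Pairwise.destutter_eq_dedup (r := sccReach Adj) (pairwise_map.2 hx.pairwise_reflTransGen)
  refine ⟨hdedup ▸ nodup_dedup _, fun C => ?_, hx.condAdj_iff, fun h => ?_⟩
  · obtain ⟨v, rfl⟩ := Quotient.exists_rep C
    exact hdedup ▸ mem_dedup.2 (mem_map_of_mem (hx.2.1 v))
  · obtain ⟨hne, u, v, huv, rfl, rfl⟩ := hx.condAdj_iff.2 h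
    refine ⟨(u, v), ⟨huv, rfl, rfl⟩, ?_⟩
    rintro ⟨u', v'⟩ ⟨hu'v', hu', hv'⟩
    obtain ⟨rfl, rfl⟩ := hx.eq_of_adj huv hu'v' hu'.symm hv'.symm hne
    rfl

end Realization

section Tour

variable [Fintype V]

open Classical in
noncomputable def sccInnerTour (Adj : V → V → Prop) (C : Quotient (sccSetoid Adj)) : List V :=
  (Finset.univ.filter fun v => Quotient.mk _ v = C).toList ++
    (Finset.univ.filter fun e : V × V =>
      Adj e.1 e.2 ∧ Quotient.mk _ e.1 = C ∧ Quotient.mk _ e.2 = C).toList.flatMap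
      fun e => [e.1, e.2]

open Classical in
noncomputable def sccOutArcs (Adj : V → V → Prop) (C : Quotient (sccSetoid Adj)) :
    Finset (V × V) :=
  Finset.univ.filter fun e => Adj e.1 e.2 ∧ Quotient.mk _ e.1 = C ∧ Quotient.mk _ e.2 ≠ C

/-- Arcs leaving `C` (in a simple step graph there is at most one) come last, so that the tour
ends in the next component. -/
noncomputable def sccTour (Adj : V → V → Prop) (C : Quotient (sccSetoid Adj)) : List V :=
  sccInnerTour Adj C ++ (sccOutArcs Adj C).toList.flatMap fun e => [e.1, e.2]

theorem mk_eq_of_mem_sccInnerTour {C : Quotient (sccSetoid Adj)} {a : V}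
    (h : a ∈ sccInnerTour Adj C) : Quotient.mk _ a = C := by
  simp only [sccInnerTour, mem_append, Finset.mem_toList, Finset.mem_filter, Finset.mem_univ,
    true_and, mem_flatMap, mem_cons, mem_nil_iff, or_false] at h
  rcases h with h | ⟨e, ⟨-, h1, h2⟩, rfl | rfl⟩
  · exact h
  · exact h1
  · exact h2

theorem mem_sccInnerTour_self (v : V) : v ∈ sccInnerTour Adj (Quotient.mk _ v) := by
  simp [sccInnerTour]

theorem pair_infix_sccTour {u v : V} (h : Adj u v) :
    [u, v] <:+: sccTour Adj (Quotient.mk _ u) := by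
  by_cases huv : Quotient.mk (sccSetoid Adj) u = Quotient.mk _ v
  · rw [sccTour, sccInnerTour]
    refine ((pair_infix_flatMap_of_mem (e := (u, v)) ?_).trans
      (suffix_append _ _).isInfix).trans (prefix_append _ _).isInfix
    simpa using ⟨h, huv.symm⟩
  · refine (pair_infix_flatMap_of_mem (e := (u, v)) ?_).trans (suffix_append _ _).isInfix
    simpa [sccOutArcs] using ⟨h, Ne.symm huv⟩

theorem mk_of_mem_sccTour {C : Quotient (sccSetoid Adj)} {a : V} (h : a ∈ sccTour Adj C) :
    Quotient.mk _ a = C ∨ condAdj Adj C (Quotient.mk _ a) := by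
  rcases mem_append.1 h with h | h
  · exact .inl (mk_eq_of_mem_sccInnerTour h)
  · simp only [sccOutArcs, mem_flatMap, Finset.mem_toList, Finset.mem_filter, Finset.mem_univ,
      true_and, mem_cons, mem_nil_iff, or_false] at h
    obtain ⟨⟨u, v⟩, ⟨huv, rfl, hne⟩, rfl | rfl⟩ := h
    · exact .inl rfl
    · exact .inr ⟨Ne.symm hne, u, _, huv, rfl, rfl⟩

theorem sccTour_ne_nil (C : Quotient (sccSetoid Adj)) : sccTour Adj C ≠ [] := by
  obtain ⟨v, rfl⟩ := Quotient.exists_rep C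
  exact ne_nil_of_mem (mem_append_left _ (mem_sccInnerTour_self v))

theorem mk_eq_of_mem_head?_sccTour {C : Quotient (sccSetoid Adj)} {a : V}
    (h : a ∈ (sccTour Adj C).head?) : Quotient.mk _ a = C := by
  obtain ⟨v, rfl⟩ := Quotient.exists_rep C
  rw [sccTour, head?_append_of_ne_nil _ (ne_nil_of_mem (mem_sccInnerTour_self v))] at h
  exact mk_eq_of_mem_sccInnerTour (mem_of_mem_head? h)

namespace IsStepOrder

variable {L : List (Quotient (sccSetoid Adj))}

theorem sccOutArcs_subsingleton (hL : IsStepOrder Adj L) (C : Quotient (sccSetoid Adj)) :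
    (sccOutArcs Adj C : Set (V × V)).Subsingleton := by
  rintro e he e' he'
  simp only [sccOutArcs, Finset.coe_filter, Finset.mem_univ, true_and, Set.mem_ofPred_eq] at he he'
  have hcond : condAdj Adj C (Quotient.mk _ e.2) := ⟨he.2.2.symm, e.1, e.2, he.1, he.2.1, rfl⟩
  have hCD := hL.condAdj_iff.1 hcond
  have hD : Quotient.mk _ e'.2 = Quotient.mk _ e.2 :=
    hL.eq_of_condAdj hCD ⟨he'.2.2.symm, e'.1, e'.2, he'.1, he'.2.1, rfl⟩
  exact (hL.existsUnique_arc hCD).unique ⟨he.1, he.2.1, rfl⟩ ⟨he'.1, he'.2.1, hD⟩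

theorem isChain_sccTour (hL : IsStepOrder Adj L) (C : Quotient (sccSetoid Adj)) :
    IsChain (ReflTransGen Adj) (sccTour Adj C) := by
  have hinner : ∀ a ∈ sccInnerTour Adj C, Quotient.mk _ a = C :=
    fun _ => mk_eq_of_mem_sccInnerTour
  rcases (sccOutArcs Adj C).eq_empty_or_nonempty with h | ⟨e, he⟩
  · simpa [sccTour, h] using isChain_reflTransGen_of_forall_mk_eq hinner
  · have hsingle : sccOutArcs Adj C = {e} := Finset.eq_singleton_iff_unique_mem.2
      ⟨he, fun e' he' => hL.sccOutArcs_subsingleton C he' he⟩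
    simp only [sccOutArcs, Finset.mem_filter, Finset.mem_univ, true_and] at he
    rw [sccTour, hsingle, Finset.toList_singleton, flatMap_singleton, ← singleton_append,
      ← append_assoc]
    refine isChain_append.2 ⟨isChain_reflTransGen_of_forall_mk_eq (C := C) ?_, .singleton _,
      fun a ha b hb => ?_⟩
    · intro a ha
      rcases mem_append.1 ha with ha | ha
      · exact hinner a ha
      · exact mem_singleton.1 ha ▸ he.2.1
    · rw [getLast?_concat, Option.mem_some_iff] at ha
      rw [head?_singleton, Option.mem_some_iff] at hb
      exact ha ▸ hb ▸ .single he.1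

theorem isChain_flatMap_sccTour (hL : IsStepOrder Adj L) :
    IsChain (ReflTransGen Adj) (L.flatMap (sccTour Adj)) := by
  rw [flatMap_def, isChain_flatten (by simpa using fun C _ => (sccTour_ne_nil C).symm)]
  refine ⟨by simpa using fun C _ => hL.isChain_sccTour C, ?_⟩
  refine (isChain_map _).2 (isChain_iff_forall_pair_infix.2 fun C D hCD a ha b hb => ?_)
  have hb := mk_eq_of_mem_head?_sccTour hb
  rcases mk_of_mem_sccTour (mem_of_getLast? ha) with ha | ha
  · exact reflTransGen_of_condAdj (ha ▸ hb ▸ hL.condAdj_iff.2 hCD)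
  · exact (sccSetoid_mk_eq_iff.1 ((hL.eq_of_condAdj hCD ha).trans hb.symm)).1

theorem exists_isRealizationD [Nonempty V] (hL : IsStepOrder Adj L) :
    ∃ x : List V, IsRealizationD 2 Adj x := by
  obtain ⟨W, -, hchain, hsub, hinf⟩ :=
    exists_isChain_of_isChain_reflTransGen hL.isChain_flatMap_sccTour
  have hmem : ∀ v, v ∈ W := fun v =>
    hsub (mem_flatMap.2 ⟨_, hL.mem _, mem_append_left _ (mem_sccInnerTour_self v)⟩)
  refine ⟨W, ne_nil_of_mem (hmem (Classical.arbitrary V)), hmem, fun u v => ?_⟩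
  rw [seqArc_two_iff]
  refine ⟨fun h => hinf u v h ?_, isChain_iff_forall_pair_infix.1 hchain u v⟩
  exact (pair_infix_sccTour h).trans (infix_of_mem_flatten (mem_map_of_mem (hL.mem _)))

end IsStepOrder

end Tour

end Digraph

theorem stmt4 {V : Type*} [Fintype V] [Nonempty V] (Adj : V → V → Prop) :
    (∃ x : List V, IsRealizationD 2 Adj x) ↔ IsSimpleStep Adj := by
  classical
  refine ⟨fun ⟨x, hx⟩ => isSimpleStep_iff.2 ⟨_, hx.isStepOrder⟩, fun h => ?_⟩
  obtain ⟨L, hL⟩ := isSimpleStep_iff.1 h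
  exact hL.exists_isRealizationD
end

section
/- Let G be an unweighted digraph. Then the number of distinct 2-realizations of G is either 0, or 1, or infinite. Moreover, G admits exactly one 2-realization if and only if G is a directed path, i.e., its vertices can be ordered v_1,…,v_n so that the arc set is exactly {(v_i, v_{i+1}) : 1 ≤ i < n}. -/
namespace Stmt5Aux

variable {V : Type*}

/-- The set of consecutive pairs of a list, as a relation. -/
def Pairs (x : List V) (u v : V) : Prop :=
  ∃ k : ℕ, x[k]? = some u ∧ x[k + 1]? = some v

lemma seqArc_iff (x : List V) (u v : V) : seqArc 2 x u v ↔ Pairs x u v := by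
  constructor
  · rintro ⟨k, k', h1, h2, h3, h4⟩
    have hk : k' = k + 1 := by omega
    subst hk
    exact ⟨k, h3, h4⟩
  · rintro ⟨k, h3, h4⟩
    exact ⟨k, k + 1, by omega, by omega, h3, h4⟩

lemma pairs_prefix {A : List V} (B : List V) {u v : V} (h : Pairs A u v) :
    Pairs (A ++ B) u v := by
  obtain ⟨k, h1, h2⟩ := h
  have hk : k + 1 < A.length := (List.getElem?_eq_some_iff.mp h2).1
  exact ⟨k, by rw [List.getElem?_append_left (by omega)]; exact h1,
    by rw [List.getElem?_append_left hk]; exact h2⟩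

lemma pairs_suffix (A : List V) {B : List V} {u v : V} (h : Pairs B u v) :
    Pairs (A ++ B) u v := by
  obtain ⟨k, h1, h2⟩ := h
  refine ⟨A.length + k, ?_, ?_⟩
  · rw [List.getElem?_append_right (by omega)]
    simpa using h1
  · rw [List.getElem?_append_right (by omega)]
    have h3 : A.length + k + 1 - A.length = k + 1 := by omega
    rw [h3]; exact h2

lemma pairs_junction {A B : List V} {u v : V} (hu : A.getLast? = some u)
    (hv : B.head? = some v) : Pairs (A ++ B) u v := by
  have hA : 0 < A.length := by
    rcases A with _ | ⟨a, A⟩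
    · simp at hu
    · simp
  refine ⟨A.length - 1, ?_, ?_⟩
  · rw [List.getElem?_append_left (by omega)]
    rw [List.getLast?_eq_getElem?] at hu
    exact hu
  · have h1 : A.length - 1 + 1 = A.length := by omega
    rw [h1, List.getElem?_append_right le_rfl, Nat.sub_self, ← List.head?_eq_getElem?]
    exact hv

lemma pairs_append_iff {A B : List V} {u v : V} :
    Pairs (A ++ B) u v ↔
      Pairs A u v ∨ Pairs B u v ∨ (A.getLast? = some u ∧ B.head? = some v) := by
  constructor
  · rintro ⟨k, h1, h2⟩
    rcases lt_trichotomy (k + 1) A.length with h | h | h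
    · exact Or.inl ⟨k, by rwa [List.getElem?_append_left (by omega)] at h1,
        by rwa [List.getElem?_append_left h] at h2⟩
    · refine Or.inr (Or.inr ⟨?_, ?_⟩)
      · rw [List.getLast?_eq_getElem?]
        have hk : A.length - 1 = k := by omega
        rw [hk]
        rwa [List.getElem?_append_left (by omega)] at h1
      · rw [List.head?_eq_getElem?]
        rw [List.getElem?_append_right (by omega)] at h2
        have hk : k + 1 - A.length = 0 := by omega
        rwa [hk] at h2
    · refine Or.inr (Or.inl ⟨k - A.length, ?_, ?_⟩)
      · rwa [List.getElem?_append_right (by omega)] at h1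
      · rw [List.getElem?_append_right (by omega)] at h2
        have hk : k + 1 - A.length = k - A.length + 1 := by omega
        rwa [hk] at h2
  · rintro (h | h | ⟨h1, h2⟩)
    exacts [pairs_prefix B h, pairs_suffix A h, pairs_junction h1 h2]

lemma isReal_iff (Adj : V → V → Prop) (x : List V) :
    IsRealizationD 2 Adj x ↔
      x ≠ [] ∧ (∀ v : V, v ∈ x) ∧ ∀ u v : V, Adj u v ↔ Pairs x u v := by
  unfold IsRealizationD
  simp only [seqArc_iff]

lemma nodup_inj {l : List V} (hnd : l.Nodup) {i j : ℕ} (hi : i < l.length)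
    (hj : j < l.length) (h : l[i] = l[j]) : i = j := by
  have hinj := List.nodup_iff_injective_get.mp hnd
  simpa using @hinj ⟨i, hi⟩ ⟨j, hj⟩ (by simpa using h)

/-- A directed path digraph has a unique realization. -/
lemma path_unique [Nonempty V] {Adj : V → V → Prop} {l : List V}
    (hl : IsDirPathList Adj l) : ∃! x : List V, IsRealizationD 2 Adj x := by
  obtain ⟨hnd, hmem, harc⟩ := hl
  have hlne : l ≠ [] := by
    obtain ⟨v⟩ := ‹Nonempty V›
    intro h; subst h; simpa using hmem v
  have hn0 : 0 < l.length := List.length_pos_iff.mpr hlne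
  have hreal : IsRealizationD 2 Adj l := by
    refine ⟨hlne, hmem, fun u v => ?_⟩
    rw [seqArc_iff]
    exact harc u v
  refine ⟨l, hreal, ?_⟩
  rintro y ⟨hyne, hymem, hyarc⟩
  have hy0 : 0 < y.length := List.length_pos_iff.mpr hyne
  -- index in l of y's head
  obtain ⟨i₀, hi₀, hi₀e⟩ := List.mem_iff_getElem.mp (hmem (y[0]'hy0))
  -- the main walk claim
  have claim : ∀ m, m < y.length → ∃ hm : i₀ + m < l.length,
      y[m]? = some (l[i₀ + m]'hm) := by
    intro m
    induction m with
    | zero =>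
      intro _
      refine ⟨by simpa using hi₀, ?_⟩
      rw [List.getElem?_eq_getElem hy0]
      simp [hi₀e]
    | succ m ih =>
      intro hm1
      obtain ⟨hm, hym⟩ := ih (by omega)
      -- the pair (y[m], y[m+1]) is an arc
      have hpair : Pairs y (l[i₀ + m]'hm) (y[m + 1]'hm1) := by
        exact ⟨m, hym, List.getElem?_eq_getElem hm1⟩
      have hadj : Adj (l[i₀ + m]'hm) (y[m + 1]'hm1) := by
        rw [hyarc, seqArc_iff]
        exact hpair
      obtain ⟨k, hk1, hk2⟩ := (harc _ _).mp hadj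
      obtain ⟨hk, hke⟩ := List.getElem?_eq_some_iff.mp hk1
      have hkm : k = i₀ + m := nodup_inj hnd hk hm hke
      subst hkm
      obtain ⟨hk1', hke'⟩ := List.getElem?_eq_some_iff.mp hk2
      refine ⟨by omega, ?_⟩
      rw [List.getElem?_eq_getElem hm1]
      simp only [← Nat.add_assoc]
      rw [hke']
  -- i₀ = 0
  have hi₀0 : i₀ = 0 := by
    obtain ⟨t, ht, hte⟩ := List.mem_iff_getElem.mp (hymem (l[0]'hn0))
    obtain ⟨hm, hym⟩ := claim t ht
    rw [List.getElem?_eq_getElem ht] at hym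
    have h5 : y[t]'ht = l[i₀ + t]'hm := by simpa using hym
    have h6 : (l[i₀ + t]'hm) = l[0]'hn0 := h5.symm.trans hte
    have := nodup_inj hnd hm hn0 h6
    omega
  subst hi₀0
  -- y.length = l.length
  have hle : y.length ≤ l.length := by
    obtain ⟨hm, _⟩ := claim (y.length - 1) (by omega)
    omega
  have hge : l.length ≤ y.length := by
    obtain ⟨t, ht, hte⟩ := List.mem_iff_getElem.mp (hymem (l[l.length - 1]'(by omega)))
    obtain ⟨hm, hym⟩ := claim t ht
    rw [List.getElem?_eq_getElem ht] at hym
    have h5 : y[t]'ht = l[0 + t]'hm := by simpa using hym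
    have heq : (l[0 + t]'hm) = l[l.length - 1]'(by omega) := h5.symm.trans hte
    have := nodup_inj hnd hm (by omega) heq
    omega
  have hlen : y.length = l.length := le_antisymm hle hge
  -- conclude y = l
  apply List.ext_getElem?
  intro k
  by_cases hk : k < y.length
  · obtain ⟨hm, hym⟩ := claim k hk
    rw [hym, List.getElem?_eq_getElem (show k < l.length by omega)]
    simp
  · rw [List.getElem?_eq_none (by omega), List.getElem?_eq_none (by omega)]

/-- If a realization has a repeated entry, there are infinitely many realizations. -/
lemma infinite_of_not_nodup {Adj : V → V → Prop} {x : List V}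
    (hx : IsRealizationD 2 Adj x) (hnd : ¬ x.Nodup) :
    {y : List V | IsRealizationD 2 Adj y}.Infinite := by
  rw [List.nodup_iff_getElem?_ne_getElem?] at hnd
  push_neg at hnd
  obtain ⟨i, j, hij, hj, hije⟩ := hnd
  have hi : i < x.length := by omega
  rw [isReal_iff] at hx
  obtain ⟨hxne, hxmem, hxarc⟩ := hx
  -- the decomposition x = A ++ y, y = B ++ C
  set A : List V := x.take (i + 1) with hA
  set y : List V := x.drop (i + 1) with hy
  set B : List V := y.take (j - i) with hB
  set C : List V := y.drop (j - i) with hC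
  have hxAy : x = A ++ y := (List.take_append_drop (i + 1) x).symm
  have hyBC : y = B ++ C := (List.take_append_drop (j - i) y).symm
  have hAlen : A.length = i + 1 := by
    rw [hA, List.length_take]; omega
  have hylen : y.length = x.length - (i + 1) := by
    rw [hy, List.length_drop]
  have hBlen : B.length = j - i := by
    rw [hB, List.length_take]; omega
  have hBpos : 0 < B.length := by omega
  -- head and last facts
  have hAlast : A.getLast? = some (x[i]'hi) := by
    rw [List.getLast?_eq_getElem?, hAlen, Nat.add_sub_cancel, hA, List.getElem?_take,
      if_pos (by omega), List.getElem?_eq_getElem hi]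
  have hyhead : y.head? = some (x[i + 1]'(by omega)) := by
    rw [List.head?_eq_getElem?, hy, List.getElem?_drop]
    rw [List.getElem?_eq_getElem (by omega)]
  have hBhead : B.head? = y.head? := by
    rw [List.head?_eq_getElem?, List.head?_eq_getElem?, hB, List.getElem?_take,
      if_pos (by omega)]
  have hBlast : B.getLast? = A.getLast? := by
    rw [List.getLast?_eq_getElem?, hBlen, hB, List.getElem?_take, if_pos (by omega),
      hy, List.getElem?_drop, hAlast]
    have harith : i + 1 + (j - i - 1) = j := by omega
    rw [harith, List.getElem?_eq_getElem hj]
    have hxi : x[i]'hi = x[j]'hj := by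
      rw [List.getElem?_eq_getElem hi, List.getElem?_eq_getElem hj] at hije
      simpa using hije
    simp [hxi]
  have hBne : B ≠ [] := by
    intro h; rw [h] at hBlen; simp at hBlen; omega
  -- Pairs B ⊆ Pairs y
  have hPBy : ∀ u v, Pairs B u v → Pairs y u v := by
    intro u v h
    rw [hyBC]
    exact pairs_prefix C h
  -- the pumped lists
  set z : ℕ → List V := fun m => (List.replicate m B).flatten ++ y with hz
  have hz0 : z 0 = y := by simp [hz]
  have hzsucc : ∀ m, z (m + 1) = B ++ z m := by
    intro m
    simp [hz, List.replicate_succ, List.append_assoc]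
  have hzhead : ∀ m, (z m).head? = B.head? := by
    intro m
    induction m with
    | zero => rw [hz0, hBhead]
    | succ m ih =>
      rw [hzsucc, List.head?_append, hBhead, hyhead]
      simp
  have hzpairs : ∀ m u v, Pairs (z (m + 1)) u v ↔
      (Pairs y u v ∨ (A.getLast? = some u ∧ B.head? = some v)) := by
    intro m
    induction m with
    | zero =>
      intro u v
      rw [hzsucc, hz0, pairs_append_iff]
      constructor
      · rintro (h | h | ⟨h1, h2⟩)
        · exact Or.inl (hPBy _ _ h)
        · exact Or.inl h
        · rw [hBlast] at h1
          rw [← hBhead] at h2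
          exact Or.inr ⟨h1, h2⟩
      · rintro (h | ⟨h1, h2⟩)
        · exact Or.inr (Or.inl h)
        · refine Or.inr (Or.inr ⟨?_, ?_⟩)
          · rw [hBlast]; exact h1
          · rw [← hBhead]; exact h2
    | succ m ih =>
      intro u v
      rw [hzsucc, pairs_append_iff, hzhead]
      constructor
      · rintro (h | h | ⟨h1, h2⟩)
        · exact Or.inl (hPBy _ _ h)
        · exact (ih u v).mp h
        · rw [hBlast] at h1
          exact Or.inr ⟨h1, h2⟩
      · rintro (h | ⟨h1, h2⟩)
        · exact Or.inr (Or.inl ((ih u v).mpr (Or.inl h)))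
        · refine Or.inr (Or.inr ⟨?_, ?_⟩)
          · rw [hBlast]; exact h1
          · exact h2
  -- each pumped list is a realization
  have hrealg : ∀ m, IsRealizationD 2 Adj (A ++ z (m + 1)) := by
    intro m
    rw [isReal_iff]
    refine ⟨?_, ?_, ?_⟩
    · intro h
      have h0 := congrArg List.length h
      rw [List.length_append, hAlen] at h0
      simp only [List.length_nil] at h0
      omega
    · intro v
      have hv := hxmem v
      rw [hxAy, List.mem_append] at hv
      rw [List.mem_append]
      rcases hv with hv | hv
      · exact Or.inl hv
      · refine Or.inr ?_
        rw [hz, List.mem_append]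
        exact Or.inr hv
    · intro u v
      rw [hxarc u v, hxAy, pairs_append_iff, pairs_append_iff, hzpairs, hzhead, hBhead]
      tauto
  -- lengths are strictly increasing, hence injective
  have hzlen : ∀ m, (z m).length = m * B.length + y.length := by
    intro m
    rw [hz]
    simp [List.length_flatten, List.map_replicate, Nat.mul_comm]
  have hinj : Function.Injective (fun m : ℕ => A ++ z (m + 1)) := by
    intro a b hab
    have hlen := congrArg List.length hab
    simp only [List.length_append, hzlen] at hlen
    have h2 : (a + 1) * B.length = (b + 1) * B.length := by linarith
    have h3 := Nat.eq_of_mul_eq_mul_right hBpos h2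
    omega
  exact Set.infinite_of_injective_forall_mem hinj (fun m => hrealg m)

end Stmt5Aux

theorem stmt5 {V : Type*} [Fintype V] [Nonempty V] (Adj : V → V → Prop) :
    ((∀ x : List V, ¬ IsRealizationD 2 Adj x) ∨
      (∃! x : List V, IsRealizationD 2 Adj x) ∨
      {x : List V | IsRealizationD 2 Adj x}.Infinite) ∧
    ((∃! x : List V, IsRealizationD 2 Adj x) ↔ ∃ l : List V, IsDirPathList Adj l) := by
  classical
  -- a nodup realization is a directed-path list
  have dirpath_of_nodup : ∀ x : List V, IsRealizationD 2 Adj x → x.Nodup →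
      IsDirPathList Adj x := by
    rintro x ⟨hne, hmem, harc⟩ hnd
    refine ⟨hnd, hmem, fun u v => ?_⟩
    rw [harc u v, Stmt5Aux.seqArc_iff]
    rfl
  -- uniqueness forces the (unique) realization to be nodup
  have nodup_of_unique : ∀ x : List V, IsRealizationD 2 Adj x →
      (∀ y : List V, IsRealizationD 2 Adj y → y = x) → x.Nodup := by
    intro x hx huniq
    by_contra hnd
    have hinf := Stmt5Aux.infinite_of_not_nodup hx hnd
    have hfin : {y : List V | IsRealizationD 2 Adj y}.Finite := by
      apply (Set.finite_singleton x).subset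
      intro y hy
      exact huniq y hy
    exact hinf hfin
  constructor
  · by_cases hall : ∀ x : List V, ¬ IsRealizationD 2 Adj x
    · exact Or.inl hall
    · push_neg at hall
      obtain ⟨x, hx⟩ := hall
      by_cases hnd : x.Nodup
      · exact Or.inr (Or.inl (Stmt5Aux.path_unique (dirpath_of_nodup x hx hnd)))
      · exact Or.inr (Or.inr (Stmt5Aux.infinite_of_not_nodup hx hnd))
  · constructor
    · rintro ⟨x, hx, huniq⟩
      exact ⟨x, dirpath_of_nodup x hx (nodup_of_unique x hx huniq)⟩
    · rintro ⟨l, hl⟩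
      exact Stmt5Aux.path_unique hl
end

section
/- For every natural number n there exists a digraph G with positive integer arc weights Π such that (G,Π) has exactly n weighted 2-realizations. -/
/-!
Take the directed `n`-cycle with unit weights. Any realization moves from each vertex to its
successor, and its length is one more than the total weight `n`, so it is the closed tour of the
cycle starting at its first vertex; conversely each of the `n` tours realizes the cycle. For
`n = 0` the empty digraph has no realization, since a realization is a nonempty sequence.
-/

/-- Number of positions `k` with `x_k = u` and `x_{k+1} = v`. -/
def arcCount {V : Type*} [DecidableEq V] (x : List V) (u v : V) : ℕ :=
  ((Finset.range x.length).filter fun k => x[k]? = some u ∧ x[k + 1]? = some v).card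

/-- `x` is a weighted 2-realization of the weighted digraph on vertex set `V` whose arcs are
the pairs `(u,v)` with `π u v > 0`, carrying weight `π u v`. -/
def IsWRealizationD {V : Type*} [DecidableEq V] (π : V → V → ℕ) (x : List V) : Prop :=
  x ≠ [] ∧ (∀ v : V, v ∈ x) ∧ ∀ u v : V, π u v = arcCount x u v

section ArcCount

variable {V : Type*} [DecidableEq V]

theorem arcCount_pos_iff {x : List V} {u v : V} :
    0 < arcCount x u v ↔ ∃ (k : ℕ) (_ : k + 1 < x.length), x[k] = u ∧ x[k + 1] = v := by
  simp only [arcCount, Finset.card_pos, Finset.filter_nonempty_iff, Finset.mem_range,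
    List.getElem?_eq_some_iff]
  constructor
  · rintro ⟨k, -, ⟨_, hu⟩, ⟨hk, hv⟩⟩
    exact ⟨k, hk, hu, hv⟩
  · rintro ⟨k, hk, hu, hv⟩
    exact ⟨k, by omega, ⟨by omega, hu⟩, ⟨hk, hv⟩⟩

theorem arcCount_le_one {x : List V} {u v : V}
    (hinj : ∀ i j (hi : i + 1 < x.length) (hj : j + 1 < x.length), x[i] = x[j] → i = j) :
    arcCount x u v ≤ 1 := by
  refine Finset.card_le_one.2 fun i hi j hj => ?_
  simp only [Finset.mem_filter, List.getElem?_eq_some_iff] at hi hj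
  obtain ⟨-, ⟨_, hiu⟩, ⟨hi, -⟩⟩ := hi
  obtain ⟨-, ⟨_, hju⟩, ⟨hj, -⟩⟩ := hj
  exact hinj i j hi hj (hiu.trans hju.symm)

theorem sum_arcCount [Fintype V] (x : List V) : ∑ u, ∑ v, arcCount x u v = x.length - 1 := by
  have hpos (k : ℕ) : ∑ u, ∑ v, (if x[k]? = some u ∧ x[k + 1]? = some v then 1 else 0)
      = if k + 1 < x.length then 1 else 0 := by
    rcases hk : x[k + 1]? with _ | b
    · simp_all
    · obtain ⟨hk, -⟩ := List.getElem?_eq_some_iff.mp hk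
      simp [List.getElem?_eq_getElem (Nat.lt_of_succ_lt hk), hk, ite_and]
  simp only [arcCount, Finset.card_filter]
  rw [Finset.sum_congr rfl fun u _ => Finset.sum_comm, Finset.sum_comm]
  simp only [hpos]
  rw [← Finset.card_filter, ← Finset.card_range (x.length - 1)]
  congr 1
  ext k
  simp only [Finset.mem_filter, Finset.mem_range]
  omega

theorem IsWRealizationD.nonempty {π : V → V → ℕ} {x : List V} (hx : IsWRealizationD π x) :
    Nonempty V :=
  ⟨x.head hx.1⟩

end ArcCount

open Fin.NatCast Fin.CommRing

def cycleWeight (n : ℕ) [NeZero n] (u v : Fin n) : ℕ := if v = u + 1 then 1 else 0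

def cycleTour (n : ℕ) [NeZero n] (r : Fin n) : List (Fin n) :=
  (List.range (n + 1)).map fun k : ℕ => r + (k : Fin n)

section Cycle

variable {n : ℕ} [NeZero n]

theorem sum_cycleWeight : ∑ u, ∑ v, cycleWeight n u v = n := by
  simp [cycleWeight]

@[simp]
theorem length_cycleTour (r : Fin n) : (cycleTour n r).length = n + 1 := by
  simp [cycleTour]

@[simp]
theorem getElem_cycleTour (r : Fin n) (k : ℕ) (hk : k < (cycleTour n r).length) :
    (cycleTour n r)[k] = r + k := by
  simp only [cycleTour, List.getElem_map, List.getElem_range]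

theorem cycleTour_injective : Function.Injective (cycleTour n) := fun r s h => by
  simpa [cycleTour, List.range_succ_eq_map] using congrArg List.head? h

theorem arcCount_cycleTour (r u v : Fin n) :
    arcCount (cycleTour n r) u v = cycleWeight n u v := by
  have hsucc (h : 0 < arcCount (cycleTour n r) u v) : v = u + 1 := by
    obtain ⟨k, hk, rfl, rfl⟩ := arcCount_pos_iff.1 h
    simp only [getElem_cycleTour, Nat.cast_succ]
    ring
  have hle : arcCount (cycleTour n r) u v ≤ 1 := arcCount_le_one fun i j hi hj hij => by
    simp only [length_cycleTour, getElem_cycleTour, add_right_inj] at hi hj hij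
    simpa [Nat.mod_eq_of_lt (by omega : i < n), Nat.mod_eq_of_lt (by omega : j < n)]
      using congrArg Fin.val hij
  by_cases h : v = u + 1
  · have hpos : 0 < arcCount (cycleTour n r) u v := by
      refine arcCount_pos_iff.2 ⟨(u - r).val, by simp, ?_, ?_⟩
      · simp
      · simp only [getElem_cycleTour, Nat.cast_succ, Fin.cast_val_eq_self, h]
        ring
    rw [cycleWeight, if_pos h]
    omega
  · simp only [cycleWeight, h, if_false]
    by_contra hne
    exact h (hsucc (Nat.pos_of_ne_zero hne))

theorem cycleTour_isWRealizationD (r : Fin n) :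
    IsWRealizationD (cycleWeight n) (cycleTour n r) := by
  refine ⟨List.ne_nil_of_length_pos (by simp), fun v => ?_,
    fun u v => (arcCount_cycleTour r u v).symm⟩
  rw [List.mem_iff_getElem]
  exact ⟨(v - r).val, by simp, by simp⟩

theorem IsWRealizationD.eq_cycleTour {x : List (Fin n)}
    (hx : IsWRealizationD (cycleWeight n) x) :
    cycleTour n (x.head hx.1) = x := by
  obtain ⟨hne, -, harc⟩ := hx
  have hsucc (k : ℕ) (hk : k + 1 < x.length) : x[k + 1] = x[k] + 1 := by
    have hpos : 0 < cycleWeight n x[k] x[k + 1] :=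
      harc _ _ ▸ arcCount_pos_iff.2 ⟨k, hk, rfl, rfl⟩
    by_contra h
    simp [cycleWeight, h] at hpos
  have hlen : x.length = n + 1 := by
    have hsum := sum_arcCount x
    simp only [← harc, sum_cycleWeight] at hsum
    have := List.length_pos_iff.2 hne
    omega
  have hform (k : ℕ) (hk : k < x.length) : x[k] = x.head hne + k := by
    induction k with
    | zero => simp [List.head_eq_getElem]
    | succ k ih => rw [hsucc k hk, ih (by omega), Nat.cast_succ, add_assoc]
  exact List.ext_getElem (by simp [hlen]) fun k _ hk => by rw [hform k hk, getElem_cycleTour]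

theorem setOf_isWRealizationD_cycleWeight :
    {x | IsWRealizationD (cycleWeight n) x} = Set.range (cycleTour n) :=
  Set.ext fun _ =>
    ⟨fun hx => ⟨_, hx.eq_cycleTour⟩, by rintro ⟨r, rfl⟩; exact cycleTour_isWRealizationD r⟩

end Cycle

theorem stmt9 (n : ℕ) :
    ∃ (N : ℕ) (π : Fin N → Fin N → ℕ),
      {x : List (Fin N) | IsWRealizationD π x}.Finite ∧
      {x : List (Fin N) | IsWRealizationD π x}.ncard = n := by
  rcases n.eq_zero_or_pos with rfl | hn
  · refine ⟨0, fun _ _ => 0, ?_⟩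
    have hempty : {x : List (Fin 0) | IsWRealizationD (fun _ _ => 0) x} = ∅ :=
      Set.eq_empty_of_forall_notMem fun _ hx => hx.nonempty.elim isEmptyElim
    simp [hempty]
  · have : NeZero n := ⟨hn.ne'⟩
    refine ⟨n, cycleWeight n, ?_⟩
    rw [setOf_isWRealizationD_cycleWeight]
    exact ⟨Set.finite_range _, by simp [Set.ncard_range_of_injective cycleTour_injective]⟩
end

section
/- For every natural number n there exists an undirected graph G (self-loops allowed) with positive integer edge weights Π such that (G,Π) has exactly n weighted 2-realizations. -/
/-- Weight of the edge `{u,v}` in the weighted sequence graph of `x` with window size 2: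
the number of ordered pairs `(k,k')` with `|k − k'| = 1`, `x_k = u` and `x_{k'} = v`
(so each consecutive occurrence of a self-loop `u,u` contributes 2). -/
def edgeCount {V : Type*} [DecidableEq V] (x : List V) (u v : V) : ℕ :=
  arcCount x u v + arcCount x v u

/-- `x` is a weighted 2-realization of the weighted undirected graph (self-loops allowed)
on vertex set `V` whose edges are the pairs `{u,v}` with `π u v > 0`, carrying weight
`π u v`. -/
def IsWRealizationG {V : Type*} [DecidableEq V] (π : V → V → ℕ) (x : List V) : Prop :=
  x ≠ [] ∧ (∀ v : V, v ∈ x) ∧ ∀ u v : V, π u v = edgeCount x u v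


/-!
A loop weight is always even, so a single vertex with a loop of weight `1` has no realization,
and a single vertex without edges has the single realization `[0]`. For `n = a + 2` take the
vertices `0, 1` with a loop of weight `2a` at `0`, an edge `{0,1}` of weight `2` and no loop at `1`.
Counting the arcs that enter and leave `1` shows that a realization either starts and ends with
`1` and contains it twice, hence is `1 0^(a+1) 1`, or contains `1` once and not at an end, hence
is `0^p 1 0^(a+2-p)` with `1 ≤ p ≤ a + 1`; these are `a + 2` distinct lists.
-/

open Finset

section ArcCount

variable {V : Type*} [DecidableEq V]

@[simp]
lemma arcCount_nil (u v : V) : arcCount [] u v = 0 := rfl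

lemma arcCount_cons (a : V) (l : List V) (u v : V) :
    arcCount (a :: l) u v = arcCount l u v + if a = u ∧ l.head? = some v then 1 else 0 := by
  unfold arcCount
  rw [card_filter, card_filter, List.length_cons, sum_range_succ']
  congr 1
  cases l <;> simp

@[simp]
lemma arcCount_singleton (a u v : V) : arcCount [a] u v = 0 := by
  simp [arcCount_cons]

lemma arcCount_append (l₁ l₂ : List V) (u v : V) :
    arcCount (l₁ ++ l₂) u v = arcCount l₁ u v + arcCount l₂ u v +
      if l₁.getLast? = some u ∧ l₂.head? = some v then 1 else 0 := by
  induction l₁ with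
  | nil => simp
  | cons a l ih =>
    rw [List.cons_append, arcCount_cons, ih, arcCount_cons]
    cases l with
    | nil => simp
    | cons b t =>
      simp only [List.cons_append, List.head?_cons, Option.some.injEq, List.getLast?_cons_cons]
      omega

lemma arcCount_replicate (n : ℕ) (a u v : V) :
    arcCount (List.replicate (n + 1) a) u v = n * if a = u ∧ a = v then 1 else 0 := by
  induction n with
  | zero => simp
  | succ n ih =>
    rw [List.replicate_succ, arcCount_cons, ih]
    simp only [List.replicate_succ, List.head?_cons, Option.some.injEq]
    split_ifs <;> omega

lemma edgeCount_self (x : List V) (u : V) : edgeCount x u u = 2 * arcCount x u u := by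
  rw [edgeCount, two_mul]

variable [Fintype V]

lemma sum_arcCount_add_head (x : List V) (v : V) :
    (∑ u, arcCount x u v) + (if x.head? = some v then 1 else 0) = x.count v := by
  induction x with
  | nil => simp
  | cons a l ih =>
    simp [arcCount_cons, sum_add_distrib, List.count_cons, ite_and, ← ih]

lemma sum_arcCount_add_getLast (x : List V) (u : V) :
    (∑ v, arcCount x u v) + (if x.getLast? = some u then 1 else 0) = x.count u := by
  induction x with
  | nil => simp
  | cons a l ih =>
    cases l with
    | nil => simp [List.count_singleton]
    | cons b t =>
      simp [arcCount_cons (l := b :: t), sum_add_distrib, List.count_cons (l := b :: t), ite_and,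
        ← ih]
      omega

lemma sum_sum_arcCount_add_one {x : List V} (hx : x ≠ []) :
    ∑ u, ∑ v, arcCount x u v + 1 = x.length := by
  have hlast : ∑ u, (if x.getLast? = some u then 1 else 0) = 1 := by
    simp [List.getLast?_eq_some_getLast hx]
  rw [← hlast, ← sum_add_distrib]
  simp only [sum_arcCount_add_getLast]
  simpa using Multiset.sum_count_eq_card (s := univ) (m := (x : Multiset V)) (by simp)

end ArcCount

section Realization

variable {V : Type*} [DecidableEq V]

lemma not_isWRealizationG_of_odd {π : V → V → ℕ} {u : V} (hu : Odd (π u u)) (x : List V) :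
    ¬ IsWRealizationG π x := by
  rintro ⟨-, -, hπ⟩
  rw [hπ, edgeCount_self] at hu
  exact Nat.not_odd_iff_even.mpr (even_two_mul _) hu

lemma isWRealizationG_const_iff [Unique V] (m : ℕ) (x : List V) :
    IsWRealizationG (fun _ _ => 2 * m) x ↔ x = List.replicate (m + 1) default := by
  constructor
  · rintro ⟨hne, -, hπ⟩
    have hloop : arcCount x default default = m := by
      have : 2 * m = 2 * arcCount x default default :=
        (hπ default default).trans (edgeCount_self x default)
      omega
    have hlen := sum_sum_arcCount_add_one hne
    rw [Fintype.sum_unique, Fintype.sum_unique, hloop] at hlen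
    exact List.eq_replicate_iff.mpr ⟨hlen.symm, fun b _ => Unique.eq_default b⟩
  · rintro rfl
    refine ⟨by simp, fun v => by simp [Unique.eq_default v], fun u v => ?_⟩
    rw [Unique.eq_default u, Unique.eq_default v, edgeCount_self, arcCount_replicate]
    simp

end Realization

section TwoVertices

def twoVertexWeight (a : ℕ) : Fin 2 → Fin 2 → ℕ := ![![2 * a, 2], ![2, 0]]

lemma twoVertexWeight_symm (a : ℕ) (u v : Fin 2) :
    twoVertexWeight a u v = twoVertexWeight a v u := by
  fin_cases u <;> fin_cases v <;> rfl

def innerOne (p q : ℕ) : List (Fin 2) := List.replicate p 0 ++ 1 :: List.replicate q 0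

def outerOnes (m : ℕ) : List (Fin 2) := 1 :: List.replicate m 0 ++ [1]

lemma idxOf_innerOne (p q : ℕ) : (innerOne p q).idxOf 1 = p := by
  simp [innerOne, List.idxOf_append_of_notMem]

lemma idxOf_outerOnes (m : ℕ) : (outerOnes m).idxOf 1 = 0 := by
  simp [outerOnes]

lemma eq_replicate_zero_of_count_one_eq_zero {l : List (Fin 2)} (h : l.count 1 = 0) :
    l = List.replicate l.length 0 := by
  refine List.eq_replicate_iff.mpr ⟨rfl, fun b hb => ?_⟩
  fin_cases b
  · rfl
  · exact absurd hb (List.count_eq_zero.mp h)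

lemma exists_eq_innerOne_of_count_one_eq_one {l : List (Fin 2)} (h : l.count 1 = 1) :
    ∃ p q, l = innerOne p q := by
  obtain ⟨s, t, rfl⟩ := List.append_of_mem (List.count_pos_iff.mp (h ▸ one_pos))
  simp only [List.count_append, List.count_cons_self] at h
  rw [eq_replicate_zero_of_count_one_eq_zero (l := s) (by omega),
    eq_replicate_zero_of_count_one_eq_zero (l := t) (by omega)]
  exact ⟨_, _, rfl⟩

lemma isWRealizationG_twoVertexWeight_of_arcCount {a : ℕ} {x : List (Fin 2)} (h0 : 0 ∈ x)
    (h1 : 1 ∈ x) (h00 : arcCount x 0 0 = a) (h01 : arcCount x 0 1 = 1)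
    (h10 : arcCount x 1 0 = 1) (h11 : arcCount x 1 1 = 0) :
    IsWRealizationG (twoVertexWeight a) x := by
  refine ⟨List.ne_nil_of_mem h0, fun v => by fin_cases v <;> assumption, fun u v => ?_⟩
  fin_cases u <;> fin_cases v <;> simp [twoVertexWeight, edgeCount, two_mul, *]

lemma isWRealizationG_innerOne {a p q : ℕ} (h : p + q = a) :
    IsWRealizationG (twoVertexWeight a) (innerOne (p + 1) (q + 1)) := by
  apply isWRealizationG_twoVertexWeight_of_arcCount <;>
    simp [innerOne, arcCount_append, arcCount_cons, arcCount_replicate, List.head?_replicate,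
      List.getLast?_replicate, ← h]

lemma isWRealizationG_outerOnes (a : ℕ) :
    IsWRealizationG (twoVertexWeight a) (outerOnes (a + 1)) := by
  apply isWRealizationG_twoVertexWeight_of_arcCount <;>
    simp [outerOnes, arcCount_append, arcCount_cons, arcCount_replicate, List.head?_replicate,
      List.getLast?_replicate]

lemma eq_outerOnes_of_count_one_eq_two {x : List (Fin 2)} (hhead : x.head? = some 1)
    (hlast : x.getLast? = some 1) (hcount : x.count 1 = 2) : x = outerOnes (x.length - 2) := by
  obtain ⟨y, rfl⟩ := List.getLast?_eq_some_iff.mp hlast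
  obtain ⟨p, q, rfl⟩ := exists_eq_innerOne_of_count_one_eq_one (l := y) (by simpa using hcount)
  cases p with
  | zero => simp [innerOne, outerOnes]
  | succ p => simp [innerOne, List.replicate_succ] at hhead

lemma exists_eq_innerOne_of_count_one_eq_one_of_ends {x : List (Fin 2)}
    (hhead : x.head? ≠ some 1) (hlast : x.getLast? ≠ some 1) (hcount : x.count 1 = 1) :
    ∃ p q, x = innerOne (p + 1) (q + 1) := by
  obtain ⟨p, q, rfl⟩ := exists_eq_innerOne_of_count_one_eq_one hcount
  cases p with
  | zero => simp [innerOne] at hhead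
  | succ p =>
    cases q with
    | zero => simp [innerOne] at hlast
    | succ q => exact ⟨p, q, rfl⟩

lemma eq_of_isWRealizationG_twoVertexWeight {a : ℕ} {x : List (Fin 2)}
    (hx : IsWRealizationG (twoVertexWeight a) x) :
    x = outerOnes (a + 1) ∨ ∃ p ∈ Icc 1 (a + 1), x = innerOne p (a + 2 - p) := by
  obtain ⟨hne, -, hπ⟩ := hx
  have h00 := hπ 0 0
  have h01 := hπ 0 1
  have h11 := hπ 1 1
  simp only [twoVertexWeight, edgeCount, Matrix.cons_val', Matrix.cons_val_zero,
    Matrix.cons_val_one, Matrix.cons_val_fin_one] at h00 h01 h11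
  have hin := sum_arcCount_add_head x 1
  have hout := sum_arcCount_add_getLast x 1
  have hsum := sum_sum_arcCount_add_one hne
  simp only [Fin.sum_univ_two] at hin hout hsum
  have hlen : x.length = a + 3 := by omega
  by_cases hhead : x.head? = some 1 <;> by_cases hlast : x.getLast? = some 1 <;>
    simp only [hhead, hlast, if_true, if_false] at hin hout
  · left
    rw [eq_outerOnes_of_count_one_eq_two hhead hlast (by omega), hlen]
    rfl
  -- `1` at exactly one end: `arcCount x 0 1` and `arcCount x 1 0` differ by one, yet sum to `2`
  · omega
  · omega
  · right
    obtain ⟨p, q, rfl⟩ := exists_eq_innerOne_of_count_one_eq_one_of_ends hhead hlast (by omega)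
    simp only [innerOne, List.length_append, List.length_replicate, List.length_cons] at hlen
    exact ⟨p + 1, by simp; omega, by congr 1; omega⟩

def twoVertexRealizations (a : ℕ) : Finset (List (Fin 2)) :=
  insert (outerOnes (a + 1)) ((Icc 1 (a + 1)).image fun p => innerOne p (a + 2 - p))

lemma setOf_isWRealizationG_twoVertexWeight (a : ℕ) :
    {x | IsWRealizationG (twoVertexWeight a) x} = twoVertexRealizations a := by
  ext x
  simp only [twoVertexRealizations, Set.mem_ofPred_eq, coe_insert, coe_image, Set.mem_insert_iff,
    Set.mem_image, mem_coe]
  constructor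
  · intro hx
    obtain h | ⟨p, hp, rfl⟩ := eq_of_isWRealizationG_twoVertexWeight hx
    exacts [.inl h, .inr ⟨p, hp, rfl⟩]
  · rintro (rfl | ⟨p, hp, rfl⟩)
    · exact isWRealizationG_outerOnes a
    · obtain ⟨hp1, hp2⟩ := mem_Icc.mp hp
      obtain ⟨p, rfl⟩ := Nat.exists_eq_add_of_le' hp1
      rw [show a + 2 - (p + 1) = a - p + 1 by omega]
      exact isWRealizationG_innerOne (by omega)

lemma card_twoVertexRealizations (a : ℕ) : (twoVertexRealizations a).card = a + 2 := by
  rw [twoVertexRealizations, card_insert_of_notMem, card_image_of_injOn, Nat.card_Icc]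
  · omega
  · intro p _ q _ hpq
    simpa [idxOf_innerOne] using congrArg (List.idxOf 1) hpq
  · simp only [mem_image, mem_Icc, not_exists, not_and]
    intro p hp h
    have := congrArg (List.idxOf 1) h
    rw [idxOf_innerOne, idxOf_outerOnes] at this
    omega

end TwoVertices

theorem stmt10 (n : ℕ) :
    ∃ (N : ℕ) (π : Fin N → Fin N → ℕ),
      (∀ u v : Fin N, π u v = π v u) ∧
      {x : List (Fin N) | IsWRealizationG π x}.Finite ∧
      {x : List (Fin N) | IsWRealizationG π x}.ncard = n := by
  rcases n with _ | _ | a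
  · have hempty : {x : List (Fin 1) | IsWRealizationG (fun _ _ => 1) x} = ∅ :=
      Set.eq_empty_of_forall_notMem fun x => not_isWRealizationG_of_odd (u := 0) odd_one x
    exact ⟨1, fun _ _ => 1, fun _ _ => rfl, by simp [hempty]⟩
  · have hsingle : {x : List (Fin 1) | IsWRealizationG (fun _ _ => 2 * 0) x} = {[0]} :=
      Set.ext fun x => isWRealizationG_const_iff 0 x
    refine ⟨1, fun _ _ => 2 * 0, fun _ _ => rfl, ?_⟩
    rw [hsingle]
    exact ⟨Set.finite_singleton _, Set.ncard_singleton _⟩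
  · refine ⟨2, twoVertexWeight a, twoVertexWeight_symm a, ?_⟩
    rw [setOf_isWRealizationG_twoVertexWeight, Set.ncard_coe_finset,
      card_twoVertexRealizations]
    exact ⟨finite_toSet _, rfl⟩
end

section
/- Let G = (V,E) be a simple undirected graph (no self-loops), let k ≥ 2, and set w = k + 1. Let G' be the graph obtained from G by adding two new vertices a and b, adding a self-loop at a and a self-loop at b, and adding the edges {a,u} and {b,u} for every u ∈ V (a and b are not adjacent to each other). Then G contains a clique on k vertices if and only if G' admits a w-realization. -/
/-- Edge of the (undirected) sequence graph of `x` with window size `w`. -/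
def seqEdge {V : Type*} (w : ℕ) (x : List V) (u v : V) : Prop :=
  seqArc w x u v ∨ seqArc w x v u

/-- `x` is a `w`-realization of the undirected graph on vertex set `V` (self-loops allowed)
with adjacency relation `Adj`. -/
def IsRealizationG {V : Type*} (w : ℕ) (Adj : V → V → Prop) (x : List V) : Prop :=
  x ≠ [] ∧ (∀ v : V, v ∈ x) ∧ ∀ u v : V, Adj u v ↔ seqEdge w x u v

/-- The graph `G'` obtained from `G` by adding two new vertices `a = Sum.inr true` and
`b = Sum.inr false` with self-loops, each adjacent to every vertex of `G` but not to
each other. -/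
def cliqueExtAdj {V : Type*} (Adj : V → V → Prop) : (V ⊕ Bool) → (V ⊕ Bool) → Prop
  | Sum.inl u, Sum.inl v => Adj u v
  | Sum.inl _, Sum.inr _ => True
  | Sum.inr _, Sum.inl _ => True
  | Sum.inr s, Sum.inr t => s = t

/-!
Two positions of a `(k + 1)`-realization at distance at most `k` carry adjacent symbols. Since
`a` and `b` are not adjacent, between an occurrence of `a` and the nearest occurrence of `b` lie
at least `k` consecutive vertices of `G`; they fit in one window, so they are pairwise adjacent,
and they are distinct because `G` has no loops.

Conversely, for a `k`-clique `C` the word `a^k B₁ a^k ⋯ a^k Bₘ a^k C b^k B₁ b^k ⋯ b^k Bₘ b^k`,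
whose blocks `Bᵢ` are the vertices and the (ordered) edges of `G`, realizes `G'`: every edge of
`G'` occurs as two consecutive symbols, the runs of `k` separators keep distinct blocks out of
each other's windows, and `C` has exactly the length needed to keep `a` and `b` apart.
-/

def WindowPairwise {α : Type*} (R : α → α → Prop) (n : ℕ) : List α → Prop
  | [] => True
  | c :: l => (∀ t ∈ l.take n, R c t) ∧ WindowPairwise R n l

namespace WindowPairwise

variable {α : Type*} {R : α → α → Prop} {n : ℕ}

theorem of_pairwise : ∀ {l : List α}, l.Pairwise R → WindowPairwise R n l
  | [], _ => trivial
  | _ :: _, h => by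
    rw [List.pairwise_cons] at h
    exact ⟨fun t ht => h.1 t (List.mem_of_mem_take ht), of_pairwise h.2⟩

-- No window reaches from `y` past `s` into `z`.
theorem append_of_le_length {y s z : List α} (hs : n ≤ s.length)
    (hys : WindowPairwise R n (y ++ s)) (hsz : WindowPairwise R n (s ++ z)) :
    WindowPairwise R n (y ++ s ++ z) := by
  induction y with
  | nil => simpa using hsz
  | cons c y ih =>
    simp only [List.cons_append, WindowPairwise] at hys ⊢
    refine ⟨?_, ih hys.2⟩
    rw [List.take_append_of_le_length (by simp; omega)]
    exact hys.1

theorem rel_of_seqArc : ∀ {x : List α}, WindowPairwise R n x →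
    ∀ {u v : α}, seqArc (n + 1) x u v → R u v
  | [], _, _, _, ⟨_, _, _, _, hu, _⟩ => by simp at hu
  | c :: x, ⟨hc, hx⟩, u, v, ⟨i, j, hij, hjn, hu, hv⟩ => by
    obtain ⟨j, rfl⟩ := Nat.exists_eq_add_of_lt hij
    rcases i with _ | i
    · obtain rfl : c = u := by simpa using hu
      refine hc v (List.mem_of_getElem? (i := j) ?_)
      rw [List.getElem?_take_of_lt (by omega)]
      simpa using hv
    · exact rel_of_seqArc hx
        ⟨i, i + 1 + j, by omega, by omega, by simpa using hu, by simpa using hv⟩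

end WindowPairwise

theorem seqArc_of_infix {α : Type*} {w : ℕ} {x : List α} {u v : α} (hw : 2 ≤ w)
    (h : [u, v] <:+: x) : seqArc w x u v := by
  obtain ⟨s, t, rfl⟩ := h
  exact ⟨s.length, s.length + 1, by omega, by omega, by simp, by simp⟩

section SepJoin

variable {α : Type*}

/-- `c^n l₁ c^n l₂ ⋯ c^n lₘ c^n z` for `L = [l₁, …, lₘ]`: runs of `n` copies of `c` keep the
blocks `lᵢ` out of each other's windows. -/
def sepJoin (c : α) (n : ℕ) (L : List (List α)) (z : List α) : List α :=
  List.replicate n c ++ (L.flatMap (· ++ List.replicate n c) ++ z)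

variable {R : α → α → Prop} {c : α} {n : ℕ} {L : List (List α)} {z : List α}

theorem windowPairwise_sepJoin
    (hL : ∀ l ∈ L, WindowPairwise R n (List.replicate n c ++ l ++ List.replicate n c))
    (hz : WindowPairwise R n (List.replicate n c ++ z)) :
    WindowPairwise R n (sepJoin c n L z) := by
  induction L with
  | nil => simpa [sepJoin] using hz
  | cons l L ih =>
    have := WindowPairwise.append_of_le_length (by simp) (hL l List.mem_cons_self)
      (ih fun l' hl' => hL l' (List.mem_cons_of_mem l hl'))
    simpa [sepJoin] using this

theorem replicate_prefix_sepJoin : List.replicate n c <+: sepJoin c n L z :=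
  List.prefix_append _ _

theorem suffix_sepJoin : z <:+ sepJoin c n L z := by
  rw [sepJoin, ← List.append_assoc]
  exact List.suffix_append _ _

theorem append_replicate_infix_sepJoin {l : List α} (hl : l ∈ L) :
    l ++ List.replicate n c <:+: sepJoin c n L z := by
  have : l ++ List.replicate n c <:+: L.flatMap (· ++ List.replicate n c) := by
    rw [List.flatMap_def]
    exact List.infix_of_mem_flatten (List.mem_map_of_mem hl)
  rw [sepJoin, ← List.append_assoc]
  exact this.trans (List.infix_append _ _ z)

end SepJoin

theorem Nat.exists_gap_of_lt {P Q : ℕ → Prop} {i j : ℕ} (hi : P i) (hj : Q j) (hij : i < j) :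
    ∃ i' j', i' < j' ∧ P i' ∧ Q j' ∧ ∀ m, i' < m → m < j' → ¬P m ∧ ¬Q m := by
  classical
  have hex : ∃ m, i < m ∧ Q m := ⟨j, hij, hj⟩
  -- the first `Q` after `i`, and the last `P` before it
  set j' := Nat.find hex
  obtain ⟨hij', hj'⟩ : i < j' ∧ Q j' := Nat.find_spec hex
  set i' := Nat.findGreatest P (j' - 1)
  have hii' : i ≤ i' := Nat.le_findGreatest (by omega) hi
  have hi'j' : i' < j' := by have := Nat.findGreatest_le (P := P) (j' - 1); omega
  refine ⟨i', j', hi'j', Nat.findGreatest_spec (by omega) hi, hj', fun m hm hmj => ?_⟩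
  exact ⟨Nat.findGreatest_is_greatest hm (by omega), fun hQ => Nat.find_min hex hmj ⟨by omega, hQ⟩⟩

section CliqueExt

variable {V : Type*} {Adj : V → V → Prop}

theorem cliqueExtAdj_symm (h : Symmetric Adj) : Symmetric (cliqueExtAdj Adj) := by
  rintro (u | s) (v | t) huv
  · exact h huv
  · trivial
  · trivial
  · exact (huv : s = t).symm

theorem pairwise_cliqueExtAdj_replicate_append_map_inl (s : Bool) (n : ℕ) {l : List V}
    (hl : l.Pairwise Adj) :
    (List.replicate n (Sum.inr s) ++ l.map Sum.inl ++ List.replicate n (Sum.inr s)).Pairwise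
      (cliqueExtAdj Adj) := by
  simp [List.pairwise_append, List.pairwise_map, List.pairwise_replicate, cliqueExtAdj, hl]

def cliqueExtSeq (k : ℕ) (L : List (List V)) (C : List V) : List (V ⊕ Bool) :=
  sepJoin (Sum.inr true) k (L.map (List.map Sum.inl))
    (C.map Sum.inl ++ sepJoin (Sum.inr false) k (L.map (List.map Sum.inl)) [])

variable {k : ℕ} {L : List (List V)} {C : List V}

theorem windowPairwise_cliqueExtSeq (hL : ∀ l ∈ L, l.Pairwise Adj) (hC : C.length = k)
    (hCA : C.Pairwise Adj) : WindowPairwise (cliqueExtAdj Adj) k (cliqueExtSeq k L C) := by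
  have hblocks : ∀ s, ∀ l ∈ L.map (List.map Sum.inl), WindowPairwise (cliqueExtAdj Adj) k
      (List.replicate k (Sum.inr s) ++ l ++ List.replicate k (Sum.inr s)) := by
    intro s l hl
    obtain ⟨l, hl', rfl⟩ := List.mem_map.1 hl
    exact .of_pairwise (pairwise_cliqueExtAdj_replicate_append_map_inl s k (hL l hl'))
  have hCpair := fun s => pairwise_cliqueExtAdj_replicate_append_map_inl s k hCA
  have hClen : k ≤ (C.map (Sum.inl : V → V ⊕ Bool)).length := by simp [hC]
  refine windowPairwise_sepJoin (hblocks true) ?_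
  rw [← List.append_assoc]
  refine .append_of_le_length hClen (.of_pairwise ((hCpair true).sublist
    (List.prefix_append _ _).sublist)) ?_
  rw [sepJoin, ← List.append_assoc]
  refine .append_of_le_length (by simp) (.of_pairwise ((hCpair false).sublist ?_))
    (windowPairwise_sepJoin (hblocks false) ?_)
  · rw [List.append_assoc]
    exact (List.suffix_append _ _).sublist
  · rw [List.append_nil]
    exact .of_pairwise (List.pairwise_replicate.2 (Or.inr (rfl : false = false)))

theorem sepJoin_false_infix_cliqueExtSeq :
    sepJoin (Sum.inr false) k (L.map (List.map Sum.inl)) [] <:+: cliqueExtSeq k L C :=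
  ((List.suffix_append _ _).trans suffix_sepJoin).isInfix

theorem replicate_infix_cliqueExtSeq (s : Bool) :
    List.replicate k (Sum.inr s) <:+: cliqueExtSeq (V := V) k L C := by
  cases s
  · exact replicate_prefix_sepJoin.isInfix.trans sepJoin_false_infix_cliqueExtSeq
  · exact replicate_prefix_sepJoin.isInfix

theorem append_replicate_infix_cliqueExtSeq (s : Bool) {l : List V} (hl : l ∈ L) :
    l.map Sum.inl ++ List.replicate k (Sum.inr s) <:+: cliqueExtSeq k L C := by
  have hl' := List.mem_map_of_mem (f := List.map (Sum.inl : V → V ⊕ Bool)) hl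
  cases s
  · exact (append_replicate_infix_sepJoin hl').trans sepJoin_false_infix_cliqueExtSeq
  · exact append_replicate_infix_sepJoin hl'

theorem seqEdge_cliqueExtSeq (hk : 2 ≤ k) (hv : ∀ v, [v] ∈ L)
    (he : ∀ u v, Adj u v → [u, v] ∈ L) :
    ∀ {p q}, cliqueExtAdj Adj p q → seqEdge (k + 1) (cliqueExtSeq k L C) p q := by
  have hloop (s : Bool) : seqArc (k + 1) (cliqueExtSeq k L C) (Sum.inr s) (Sum.inr s) := by
    refine seqArc_of_infix (by omega) (List.IsInfix.trans ?_ (replicate_infix_cliqueExtSeq s))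
    obtain ⟨m, rfl⟩ := Nat.exists_eq_add_of_le' hk
    exact (List.prefix_append [Sum.inr s, Sum.inr s] (List.replicate m _)).isInfix
  have hvert (v : V) (s : Bool) :
      seqArc (k + 1) (cliqueExtSeq k L C) (Sum.inl v) (Sum.inr s) := by
    refine seqArc_of_infix (by omega)
      (List.IsInfix.trans ?_ (append_replicate_infix_cliqueExtSeq s (hv v)))
    obtain ⟨m, rfl⟩ := Nat.exists_eq_add_of_le' (by omega : 1 ≤ k)
    exact (List.prefix_append [Sum.inl v, Sum.inr s] (List.replicate m _)).isInfix
  rintro (u | s) (v | t) h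
  · refine Or.inl (seqArc_of_infix (by omega) (List.IsInfix.trans ?_
      (append_replicate_infix_cliqueExtSeq true (he u v h))))
    exact (List.prefix_append _ _).isInfix
  · exact Or.inl (hvert u t)
  · exact Or.inr (hvert v s)
  · obtain rfl : s = t := h
    exact Or.inl (hloop s)

theorem isRealizationG_cliqueExtSeq (hsymm : Symmetric Adj) (hk : 2 ≤ k)
    (hL : ∀ l ∈ L, l.Pairwise Adj) (hv : ∀ v, [v] ∈ L) (he : ∀ u v, Adj u v → [u, v] ∈ L)
    (hC : C.length = k) (hCA : C.Pairwise Adj) :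
    IsRealizationG (k + 1) (cliqueExtAdj Adj) (cliqueExtSeq k L C) := by
  have hmem : ∀ p, p ∈ cliqueExtSeq k L C := by
    rintro (v | s)
    · exact (append_replicate_infix_cliqueExtSeq true (hv v)).subset (by simp)
    · exact (replicate_infix_cliqueExtSeq s).subset (List.mem_replicate.2 ⟨by omega, rfl⟩)
  have hwin := windowPairwise_cliqueExtSeq hL hC hCA
  refine ⟨List.ne_nil_of_mem (hmem (Sum.inr true)), hmem, fun p q =>
    ⟨seqEdge_cliqueExtSeq hk hv he, ?_⟩⟩
  rintro (h | h)
  · exact hwin.rel_of_seqArc h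
  · exact cliqueExtAdj_symm hsymm (hwin.rel_of_seqArc h)

theorem exists_isRealizationG_of_clique [Fintype V] (hsymm : Symmetric Adj) (hk : 2 ≤ k)
    {S : Finset V} (hS : S.card = k) (hSA : ∀ u ∈ S, ∀ v ∈ S, u ≠ v → Adj u v) :
    ∃ x, IsRealizationG (k + 1) (cliqueExtAdj Adj) x := by
  classical
  let L : List (List V) := Finset.univ.toList.map (fun v => [v]) ++
    (Finset.univ.filter fun e : V × V => Adj e.1 e.2).toList.map (fun e => [e.1, e.2])
  refine ⟨cliqueExtSeq k L S.toList, isRealizationG_cliqueExtSeq hsymm hk ?_ ?_ ?_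
    (by simp [hS]) (S.nodup_toList.pairwise_of_forall_ne (by simpa using hSA))⟩
  · intro l hl
    simp only [L, List.mem_append, List.mem_map, Finset.mem_toList, Finset.mem_filter] at hl
    rcases hl with ⟨v, -, rfl⟩ | ⟨e, ⟨-, he⟩, rfl⟩
    · exact List.pairwise_singleton _ _
    · exact List.pairwise_pair.2 he
  · intro v
    simp [L]
  · intro u v h
    simp [L, h]

theorem exists_inl_run_of_isRealizationG {x : List (V ⊕ Bool)}
    (hx : IsRealizationG (k + 1) (cliqueExtAdj Adj) x) :
    ∃ p, ∀ m < k, ∃ v, x[p + m]? = some (Sum.inl v) := by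
  suffices key : ∀ {s t : Bool} {i j : ℕ}, s ≠ t → x[i]? = some (Sum.inr s) →
      x[j]? = some (Sum.inr t) → i < j → ∃ p, ∀ m < k, ∃ v, x[p + m]? = some (Sum.inl v) by
    obtain ⟨i, hi⟩ := List.mem_iff_getElem?.1 (hx.2.1 (Sum.inr true))
    obtain ⟨j, hj⟩ := List.mem_iff_getElem?.1 (hx.2.1 (Sum.inr false))
    rcases lt_trichotomy i j with hij | rfl | hji
    · exact key (by decide) hi hj hij
    · simp [hi] at hj
    · exact key (by decide) hj hi hji
  intro s t i j hst hi hj hij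
  obtain ⟨i, j, hij, hi, hj, hgap⟩ :=
    Nat.exists_gap_of_lt (P := fun m => x[m]? = some (Sum.inr s))
      (Q := fun m => x[m]? = some (Sum.inr t)) hi hj hij
  have hfar : i + k < j := by
    by_contra! hle
    exact hst ((hx.2.2 _ _).2 (Or.inl ⟨i, j, hij, by omega, hi, hj⟩))
  have hjlen : j < x.length := (List.getElem?_eq_some_iff.1 hj).1
  refine ⟨i + 1, fun m hm => ?_⟩
  have hlen : i + 1 + m < x.length := by omega
  obtain ⟨hs, ht⟩ := hgap (i + 1 + m) (by omega) (by omega)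
  rw [List.getElem?_eq_getElem hlen] at hs ht ⊢
  rcases hz : x[i + 1 + m] with v | r
  · exact ⟨v, rfl⟩
  · rw [hz] at hs ht
    cases r <;> cases s <;> cases t <;> simp_all

theorem exists_clique_of_fin_adj (hloop : ∀ v, ¬ Adj v v) (f : Fin k → V)
    (hf : ∀ i j, i ≠ j → Adj (f i) (f j)) :
    ∃ S : Finset V, S.card = k ∧ ∀ u ∈ S, ∀ v ∈ S, u ≠ v → Adj u v := by
  classical
  have hinj : Function.Injective f := fun i j hij =>
    by_contra fun hne => hloop (f j) (hij ▸ hf i j hne)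
  refine ⟨Finset.univ.image f, by simp [Finset.card_image_of_injective _ hinj], ?_⟩
  simp only [Finset.mem_image, Finset.mem_univ, true_and]
  rintro _ ⟨i, rfl⟩ _ ⟨j, rfl⟩ hne
  exact hf i j (fun h => hne (h ▸ rfl))

theorem exists_clique_of_inl_run (hloop : ∀ v, ¬ Adj v v) {x : List (V ⊕ Bool)}
    (hx : IsRealizationG (k + 1) (cliqueExtAdj Adj) x) {p : ℕ}
    (hrun : ∀ m < k, ∃ v, x[p + m]? = some (Sum.inl v)) :
    ∃ S : Finset V, S.card = k ∧ ∀ u ∈ S, ∀ v ∈ S, u ≠ v → Adj u v := by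
  choose f hf using hrun
  refine exists_clique_of_fin_adj hloop (fun i => f i i.2) fun i j hij =>
    (hx.2.2 (Sum.inl _) (Sum.inl _)).2 ?_
  rcases lt_or_gt_of_ne (Fin.val_ne_of_ne hij) with h | h
  · exact Or.inl ⟨p + i, p + j, by omega, by omega, hf i i.2, hf j j.2⟩
  · exact Or.inr ⟨p + j, p + i, by omega, by omega, hf j j.2, hf i i.2⟩

end CliqueExt

theorem stmt12 {V : Type*} [Fintype V] (Adj : V → V → Prop) (hsymm : Symmetric Adj)
    (hloopfree : ∀ v : V, ¬ Adj v v) (k : ℕ) (hk : 2 ≤ k) :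
    (∃ S : Finset V, S.card = k ∧ ∀ u ∈ S, ∀ v ∈ S, u ≠ v → Adj u v) ↔
    (∃ x : List (V ⊕ Bool), IsRealizationG (k + 1) (cliqueExtAdj Adj) x) := by
  refine ⟨fun ⟨S, hS, hSA⟩ => exists_isRealizationG_of_clique hsymm hk hS hSA, ?_⟩
  rintro ⟨x, hx⟩
  obtain ⟨p, hp⟩ := exists_inl_run_of_isRealizationG hx
  exact exists_clique_of_inl_run hloopfree hx hp
end

section
/- Let w ≥ 3, set k = w − 1, and let G = (V,E) be an undirected graph (self-loops allowed). If G admits a w-realization of length at least k, then the auxiliary graph H^{(k)}(G) has a connected component whose vertices and edges together cover every edge of G. -/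
/-- Vertex of the auxiliary graph `H^{(k)}(G)`: a `k`-tuple of vertices of `G` that are
pairwise adjacent (`{v_i, v_j} ∈ E` for all `i < j`). -/
def HVert {V : Type*} (Adj : V → V → Prop) (k : ℕ) (y : List V) : Prop :=
  y.length = k ∧ y.Pairwise Adj

/-- (Oriented) edge of the auxiliary graph `H^{(k)}(G)`: `{y, y'}` is an edge when
`(y_2, …, y_k) = (y'_1, …, y'_{k−1})` and `{y_1, y'_k} ∈ E`. -/
def HAdj {V : Type*} (Adj : V → V → Prop) (k : ℕ) (y y' : List V) : Prop :=
  HVert Adj k y ∧ HVert Adj k y' ∧ y.tail = y'.dropLast ∧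
    ∃ u v : V, y.head? = some u ∧ y'.getLast? = some v ∧ Adj u v

/-- The edge `{u,v}` of `G` is covered by the `H^{(k)}`-vertex `y`: `u` and `v` appear at
two distinct positions of the tuple `y`. -/
def CoversV {V : Type*} (y : List V) (u v : V) : Prop :=
  ∃ i j : ℕ, i ≠ j ∧ y[i]? = some u ∧ y[j]? = some v

/-- The edge `{u,v}` of `G` is covered by the `H^{(k)}`-edge `{y, y'}` (oriented as
`y` shifting into `y'`): `{u,v} = {y_1, y'_k}`. -/
def CoversE {V : Type*} (y y' : List V) (u v : V) : Prop :=
  (y.head? = some u ∧ y'.getLast? = some v) ∨ (y.head? = some v ∧ y'.getLast? = some u)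

/-- Reachability in the (undirected) auxiliary graph `H^{(k)}(G)`. -/
def HReach {V : Type*} (Adj : V → V → Prop) (k : ℕ) : List V → List V → Prop :=
  Relation.ReflTransGen fun a b => HAdj Adj k a b ∨ HAdj Adj k b a

/-- Some connected component of `H^{(k)}(G)` covers, by its vertices and edges together,
every edge of `G`. -/
def ComponentCovers {V : Type*} (Adj : V → V → Prop) (k : ℕ) : Prop :=
  ∃ y₀ : List V, HVert Adj k y₀ ∧ ∀ u v : V, Adj u v →
    (∃ y : List V, HReach Adj k y₀ y ∧ CoversV y u v) ∨
    (∃ y y' : List V, HReach Adj k y₀ y ∧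
      (HAdj Adj k y y' ∧ CoversE y y' u v ∨ HAdj Adj k y' y ∧ CoversE y' y u v))

/-!
The windows `x_{i+1}, …, x_{i+k}` of `k = w - 1` consecutive symbols of a `w`-realization `x`
are vertices of `H^{(k)}(G)`, since any two positions of a window lie within distance `w - 1`,
and consecutive windows are joined by an edge of `H^{(k)}(G)`, since `x_{i+1}` and `x_{i+k+1}`
lie at distance `k`. So all windows lie in one component. An edge of `G` comes from positions
`p < p'` with `p' - p ≤ k`: if `p' - p < k` both positions fit into one window, and if
`p' - p = k` the edge is covered by the `H^{(k)}`-edge between the windows starting at `p` and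
`p + 1`.
-/

section SequenceWindows

variable {V : Type*} {x : List V} {k i : ℕ}

def window (x : List V) (k i : ℕ) : List V := (x.drop i).take k

lemma length_window (h : i + k ≤ x.length) : (window x k i).length = k := by
  simp only [window, List.length_take, List.length_drop]
  omega

lemma getElem?_window {j : ℕ} (hj : j < k) : (window x k i)[j]? = x[i + j]? := by
  simp [window, hj]

lemma head?_window (hk : 0 < k) : (window x k i).head? = x[i]? := by
  rw [List.head?_eq_getElem?, getElem?_window hk, Nat.add_zero]

lemma getLast?_window (hk : 0 < k) (h : i + k ≤ x.length) :
    (window x k i).getLast? = x[i + k - 1]? := by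
  rw [List.getLast?_eq_getElem?, length_window h, getElem?_window (by omega)]
  congr 1
  omega

lemma tail_window (h : i + k < x.length) :
    (window x k i).tail = (window x k (i + 1)).dropLast := by
  simp only [window, List.tail_take_eq_take_tail, List.tail_drop, List.dropLast_eq_take,
    List.take_take, List.length_take, List.length_drop]
  congr 1
  omega

lemma exists_window_coversV {p p' : ℕ} {u v : V} (hlen : k ≤ x.length) (hpp' : p < p')
    (hp' : p' < p + k) (hu : x[p]? = some u) (hv : x[p']? = some v) :
    ∃ i, i + k ≤ x.length ∧ CoversV (window x k i) u v := by
  have hp'len : p' < x.length := (List.getElem?_eq_some_iff.1 hv).1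
  -- the window starting at `p`, shifted left just enough to fit into `x`
  refine ⟨min p (x.length - k), by omega, p - min p (x.length - k), p' - min p (x.length - k),
    by omega, ?_, ?_⟩
  · rwa [getElem?_window (by omega), Nat.add_sub_cancel' (by omega)]
  · rwa [getElem?_window (by omega), Nat.add_sub_cancel' (by omega)]

lemma coversE_window {p : ℕ} {u v : V} (hk : 0 < k) (h : p + k < x.length)
    (hu : x[p]? = some u) (hv : x[p + k]? = some v) :
    CoversE (window x k p) (window x k (p + 1)) u v := by
  refine Or.inl ⟨by rwa [head?_window hk], ?_⟩
  rwa [getLast?_window hk (by omega), show p + 1 + k - 1 = p + k by omega]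

lemma CoversV.symm {y : List V} {u v : V} (h : CoversV y u v) : CoversV y v u := by
  obtain ⟨i, j, hij, hi, hj⟩ := h
  exact ⟨j, i, hij.symm, hj, hi⟩

lemma CoversE.symm {y y' : List V} {u v : V} (h : CoversE y y' u v) : CoversE y y' v u :=
  Or.symm h

def CoveredByComponentOf (Adj : V → V → Prop) (k : ℕ) (y₀ : List V) (u v : V) : Prop :=
  (∃ y, HReach Adj k y₀ y ∧ CoversV y u v) ∨
    (∃ y y', HReach Adj k y₀ y ∧
      (HAdj Adj k y y' ∧ CoversE y y' u v ∨ HAdj Adj k y' y ∧ CoversE y' y u v))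

lemma CoveredByComponentOf.symm {Adj : V → V → Prop} {k : ℕ} {y₀ : List V} {u v : V}
    (h : CoveredByComponentOf Adj k y₀ u v) : CoveredByComponentOf Adj k y₀ v u := by
  rcases h with ⟨y, hy, hcov⟩ | ⟨y, y', hy, ⟨hadj, hcov⟩ | ⟨hadj, hcov⟩⟩
  · exact Or.inl ⟨y, hy, hcov.symm⟩
  · exact Or.inr ⟨y, y', hy, Or.inl ⟨hadj, hcov.symm⟩⟩
  · exact Or.inr ⟨y, y', hy, Or.inr ⟨hadj, hcov.symm⟩⟩

section Realization

variable {Adj : V → V → Prop} (hadj : ∀ u v, seqArc (k + 1) x u v → Adj u v)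
include hadj

lemma hVert_window (h : i + k ≤ x.length) : HVert Adj k (window x k i) := by
  refine ⟨length_window h, List.pairwise_iff_getElem.mpr fun a b ha hb hab => ?_⟩
  rw [length_window h] at ha hb
  refine hadj _ _ ⟨i + a, i + b, by omega, by omega, ?_, ?_⟩
  · rw [← getElem?_window ha, List.getElem?_eq_getElem]
  · rw [← getElem?_window hb, List.getElem?_eq_getElem]

lemma hAdj_window (hk : 0 < k) (h : i + k < x.length) :
    HAdj Adj k (window x k i) (window x k (i + 1)) := by
  refine ⟨hVert_window hadj (by omega), hVert_window hadj (by omega), tail_window h,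
    x[i], x[i + k], ?_, ?_, hadj _ _ ⟨i, i + k, by omega, by omega, ?_, ?_⟩⟩
  · rw [head?_window hk, List.getElem?_eq_getElem]
  · rw [getLast?_window hk (by omega), show i + 1 + k - 1 = i + k by omega,
      List.getElem?_eq_getElem]
  · exact List.getElem?_eq_getElem _
  · exact List.getElem?_eq_getElem _

lemma hReach_window (hk : 0 < k) (h : i + k ≤ x.length) :
    HReach Adj k (window x k 0) (window x k i) := by
  induction i with
  | zero => exact Relation.ReflTransGen.refl
  | succ n ih => exact (ih (by omega)).tail (Or.inl (hAdj_window hadj hk (by omega)))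

lemma coveredByComponentOf_of_seqArc {u v : V} (hk : 0 < k) (hlen : k ≤ x.length)
    (harc : seqArc (k + 1) x u v) : CoveredByComponentOf Adj k (window x k 0) u v := by
  obtain ⟨p, p', hpp', hp', hu, hv⟩ := harc
  rcases Nat.lt_or_ge p' (p + k) with hnear | hfar
  · obtain ⟨i, hi, hcov⟩ := exists_window_coversV hlen hpp' hnear hu hv
    exact Or.inl ⟨window x k i, hReach_window hadj hk hi, hcov⟩
  · obtain rfl : p' = p + k := by omega
    have h : p + k < x.length := (List.getElem?_eq_some_iff.1 hv).1
    exact Or.inr ⟨window x k p, window x k (p + 1), hReach_window hadj hk (by omega),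
      Or.inl ⟨hAdj_window hadj hk h, coversE_window hk h hu hv⟩⟩

end Realization

end SequenceWindows

theorem stmt13_general {V : Type*} (Adj : V → V → Prop)
    (w : ℕ) (hw : 3 ≤ w) (x : List V) (hx : IsRealizationG w Adj x)
    (hlen : w - 1 ≤ x.length) :
    ComponentCovers Adj (w - 1) := by
  obtain ⟨k, rfl⟩ : ∃ k, w = k + 1 := ⟨w - 1, by omega⟩
  rw [Nat.add_sub_cancel] at hlen ⊢
  have hk : 0 < k := by omega
  obtain ⟨-, -, hiff⟩ := hx
  have hadj : ∀ u v, seqArc (k + 1) x u v → Adj u v := fun u v h => (hiff u v).2 (Or.inl h)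
  refine ⟨window x k 0, hVert_window hadj (by omega), fun u v huv => ?_⟩
  rcases (hiff u v).1 huv with harc | harc
  · exact coveredByComponentOf_of_seqArc hadj hk hlen harc
  · exact (coveredByComponentOf_of_seqArc hadj hk hlen harc).symm

theorem stmt13 {V : Type*} (Adj : V → V → Prop) (hsymm : Symmetric Adj)
    (w : ℕ) (hw : 3 ≤ w) (x : List V) (hx : IsRealizationG w Adj x)
    (hlen : w - 1 ≤ x.length) :
    ComponentCovers Adj (w - 1) :=
  stmt13_general Adj w hw x hx hlen
end

section
/- For all positive integers n and k, there exists an unweighted digraph G with exactly 3kn + 1 vertices such that G admits a (k+1)-realization and every (k+1)-realization of G has length at least 2k·n^k. -/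
/-!
The digraph is the (k+1)-window digraph of a base-`n` counter: after a start letter, each
`t < n ^ k` contributes `k` letters `digit j v` listing the digits of `t`, then `k` letters
`carry j v c` repeating each digit with a bit `c` that, for `j > 0`, says whether a carry enters
digit `j` on passing to `t + 1`. Each letter occurs only at positions of one residue class
modulo `2k`, so a common out-neighbour of the letters at positions `p - k` and `p - 1` occurs
exactly `k` places after the first and one place after the second. After the first block every
letter is determined by the letter `k` places back (its digit) and the letter one place back (its
bit), so that common out-neighbour is the letter at position `p`. The start letter has no in-arcs
and the first block is forced by the increasing order of its digit positions, so a realization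
copies the word up to position `2kn^k`, the only occurrence of `carry (k-1) (n-1) true`.
-/

section SequenceDigraph

variable {V W : Type*}

theorem seqArc_map_equiv (e : V ≃ W) {w : ℕ} {x : List V} {a b : W} :
    seqArc w (x.map e) a b ↔ seqArc w x (e.symm a) (e.symm b) := by
  simp only [seqArc, List.getElem?_map, Option.map_eq_some_iff, ← Equiv.eq_symm_apply,
    exists_eq_right]

theorem IsRealizationD.map_equiv (e : V ≃ W) {w : ℕ} {Adj : V → V → Prop} {x : List V}
    (h : IsRealizationD w Adj x) :
    IsRealizationD w (fun a b => Adj (e.symm a) (e.symm b)) (x.map e) :=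
  ⟨by simpa using h.1, fun v => List.mem_map.mpr ⟨e.symm v, h.2.1 _, e.apply_symm_apply v⟩,
    fun a b => (h.2.2 _ _).trans (seqArc_map_equiv e).symm⟩

theorem IsRealizationD.card_le_length [Fintype V] {w : ℕ} {Adj : V → V → Prop} {x : List V}
    (h : IsRealizationD w Adj x) : Fintype.card V ≤ x.length := by
  classical
  exact (Finset.card_le_card fun v _ => List.mem_toFinset.mpr (h.2.1 v)).trans x.toFinset_card_le

theorem isRealizationD_seqArc {w : ℕ} {x : List V} (hx : x ≠ []) (hmem : ∀ v, v ∈ x) :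
    IsRealizationD w (seqArc w x) x :=
  ⟨hx, hmem, fun _ _ => Iff.rfl⟩

theorem getElem?_eq_of_arcs_determine {x y : List V} {k P : ℕ} (hk : 0 < k)
    (hy : ∀ a b, seqArc (k + 1) y a b → seqArc (k + 1) x a b)
    (hinit : ∀ p ≤ k, p < y.length → y[p]? = x[p]?)
    (hx : ∀ p, k < p → p ≤ P → ∀ a a' b, x[p - k]? = some a → x[p - 1]? = some a' →
      seqArc (k + 1) x a b → seqArc (k + 1) x a' b → x[p]? = some b) :
    ∀ p ≤ P, p < y.length → y[p]? = x[p]? := by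
  intro p
  induction p using Nat.strong_induction_on with
  | _ p ih =>
  intro hpP hpy
  rcases le_or_gt p k with hpk | hkp
  · exact hinit p hpk hpy
  have hfirst := List.getElem?_eq_getElem (l := y) (i := p - k) (by omega)
  have hlast := List.getElem?_eq_getElem (l := y) (i := p - 1) (by omega)
  have hp := List.getElem?_eq_getElem hpy
  rw [hp]
  refine (hx p hkp hpP _ _ _ ?_ ?_ (hy _ _ ⟨p - k, p, by omega, by omega, hfirst, hp⟩)
    (hy _ _ ⟨p - 1, p, by omega, by omega, hlast, hp⟩)).symm
  · rw [← ih (p - k) (by omega) (by omega) (by omega), hfirst]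
  · rw [← ih (p - 1) (by omega) (by omega) (by omega), hlast]

theorem offsets_eq_of_modEq {k i j i' j' : ℕ} (hk : 0 < k) (hij : i < j) (hji : j ≤ i + k)
    (hij' : i' < j') (hji' : j' ≤ i' + k) (hi : i + (k - 1) ≡ i' [MOD 2 * k])
    (hj : j ≡ j' [MOD 2 * k]) : j = i + k ∧ j' = i' + 1 := by
  have hdvd : ((2 * k : ℕ) : ℤ) ∣ (j' - j : ℤ) - (i' - (i + (k - 1) : ℕ)) :=
    dvd_sub (Nat.modEq_iff_dvd.mp hj) (Nat.modEq_iff_dvd.mp hi)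
  have h0 := Int.eq_zero_of_dvd_of_nonneg_of_lt (by push_cast; omega) (by push_cast; omega) hdvd
  push_cast at h0
  omega

theorem exists_offsets_of_seqArc {x : List V} {k p : ℕ} (φ : V → ℕ)
    (hφ : ∀ i a, x[i]? = some a → i ≡ φ a [MOD 2 * k]) (hk : 0 < k) (hkp : k ≤ p)
    {a a' b : V} (ha : x[p - k]? = some a) (ha' : x[p - 1]? = some a')
    (h : seqArc (k + 1) x a b) (h' : seqArc (k + 1) x a' b) :
    (∃ j, x[j - k]? = some a ∧ x[j]? = some b) ∧
      ∃ j, x[j - 1]? = some a' ∧ x[j]? = some b := by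
  obtain ⟨i, j, hij, hji, hi, hj⟩ := h
  obtain ⟨i', j', hij', hji', hi', hj'⟩ := h'
  have hii' : i + (k - 1) ≡ i' [MOD 2 * k] := by
    have := ((hφ _ _ hi).trans (hφ _ _ ha).symm).add_right (k - 1)
    rw [show p - k + (k - 1) = p - 1 by omega] at this
    exact this.trans ((hφ _ _ ha').trans (hφ _ _ hi').symm)
  obtain ⟨rfl, rfl⟩ := offsets_eq_of_modEq hk hij (by omega) hij' (by omega) hii'
    ((hφ _ _ hj).trans (hφ _ _ hj').symm)
  exact ⟨⟨i + k, by simpa using hi, hj⟩, ⟨i' + 1, by simpa using hi', hj'⟩⟩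

end SequenceDigraph

namespace CounterWord

inductive Letter (k n : ℕ) where
  | start : Letter k n
  | digit (j : Fin k) (v : Fin n) : Letter k n
  | carry (j : Fin k) (v : Fin n) (c : Bool) : Letter k n

variable {k n : ℕ}

def Letter.equivOption : Letter k n ≃ Option (Fin k × Fin n ⊕ Fin k × Fin n × Bool) where
  toFun
    | .start => none
    | .digit j v => some (.inl (j, v))
    | .carry j v c => some (.inr (j, v, c))
  invFun
    | none => .start
    | some (.inl (j, v)) => .digit j v
    | some (.inr (j, v, c)) => .carry j v c
  left_inv a := by cases a <;> rfl
  right_inv o := by rcases o with _ | ⟨j, v⟩ | ⟨j, v, c⟩ <;> rfl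

instance : Fintype (Letter k n) := Fintype.ofEquiv _ Letter.equivOption.symm

theorem Letter.card : Fintype.card (Letter k n) = 3 * k * n + 1 := by
  rw [Fintype.card_congr Letter.equivOption]
  simp only [Fintype.card_option, Fintype.card_sum, Fintype.card_prod, Fintype.card_fin,
    Fintype.card_bool]
  ring

def phase : Letter k n → ℕ
  | .start => 0
  | .digit j _ => j + 1
  | .carry j _ _ => k + j + 1

def carryOut : Letter k n → Bool
  | .start => false
  | .digit _ v => decide ((v : ℕ) = 0)
  | .carry j v c => (decide ((j : ℕ) = 0) || c) && decide ((v : ℕ) = n - 1)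

section Digits

variable (n) [NeZero n]

def digitOf (j t : ℕ) : Fin n := Fin.ofNat n (t / n ^ j)

theorem dvd_succ_iff_mod_eq {m : ℕ} : n ∣ m + 1 ↔ m % n = n - 1 := by
  have hn := NeZero.pos n
  rw [Nat.dvd_iff_mod_eq_zero, ← Nat.mod_add_mod]
  have := Nat.mod_lt m hn
  constructor
  · intro h
    by_contra hne
    rw [Nat.mod_eq_of_lt (by omega)] at h
    omega
  · intro h
    rw [h, Nat.sub_add_cancel hn, Nat.mod_self]

theorem digitOf_succ (j t : ℕ) :
    digitOf n j (t + 1) = Fin.ofNat n (digitOf n j t + (decide (n ^ j ∣ t + 1)).toNat) := by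
  ext
  simp only [digitOf, Fin.val_ofNat, Nat.succ_div, Nat.mod_add_mod]
  split_ifs <;> simp_all

theorem pow_succ_dvd_succ_iff (j t : ℕ) :
    n ^ (j + 1) ∣ t + 1 ↔ n ^ j ∣ t + 1 ∧ (digitOf n j t : ℕ) = n - 1 := by
  rw [pow_succ]
  constructor
  · intro h
    have hj : n ^ j ∣ t + 1 := (Dvd.intro _ rfl).trans h
    have hdvd := (Nat.dvd_div_iff_mul_dvd hj).mpr h
    rw [Nat.succ_div, if_pos hj] at hdvd
    exact ⟨hj, by simpa [digitOf] using (dvd_succ_iff_mod_eq n).mp hdvd⟩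
  · rintro ⟨hj, hd⟩
    rw [← Nat.dvd_div_iff_mul_dvd hj, Nat.succ_div, if_pos hj]
    exact (dvd_succ_iff_mod_eq n).mpr (by simpa [digitOf] using hd)

theorem digitOf_mul_add {j a b : ℕ} (hb : b < n ^ j) :
    digitOf n j (a * n ^ j + b) = Fin.ofNat n a := by
  rw [digitOf, Nat.add_comm, Nat.add_mul_div_right _ _ (pow_pos (NeZero.pos n) j),
    Nat.div_eq_of_lt hb, Nat.zero_add]

-- Digit `0` advances at every step, so the bit of its carry letters is free: recording whether
-- digit `k - 1` is zero instead makes every letter occur.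
def flag (k j t : ℕ) : Bool :=
  if j = 0 then decide (digitOf n (k - 1) t = 0) else decide (n ^ j ∣ t + 1)

theorem decide_eq_zero_or_flag (k j t : ℕ) :
    (decide (j = 0) || flag n k j t) = decide (n ^ j ∣ t + 1) := by
  by_cases hj : j = 0 <;> simp [flag, hj]

end Digits

section Step

variable (n) [NeZero n]

-- The letter `k` places after `a` and one place after `a'`: its digit is read off `a`, the bit
-- of a carry letter off `a'`.
def step : Letter k n → Letter k n → Letter k n
  | .start, _ => .start
  | .digit j v, a => .carry j v (carryOut a)
  | .carry j v c, _ => .digit j (Fin.ofNat n (v + (decide ((j : ℕ) = 0) || c).toNat))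

variable {n}

theorem step_eq_digit_congr {a c c' : Letter k n} {j : Fin k} {v : Fin n}
    (h : step n a c = .digit j v) : step n a c' = .digit j v := by
  cases a with
  | carry => exact h
  | _ => simp [step] at h

theorem step_right_eq_of_step_eq {a c a' c' : Letter k n} (h : step n a c = step n a' c') :
    step n a c' = step n a c := by
  cases a <;> cases a' <;> simp_all [step]

end Step

theorem mul_pow_add_lt_pow {n k v j r : ℕ} (hv : v < n) (hj : j < k) (hr : r < n ^ j) :
    v * n ^ j + r < n ^ k :=
  calc v * n ^ j + r < (v + 1) * n ^ j := by rw [Nat.succ_mul]; omega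
    _ ≤ n * n ^ j := Nat.mul_le_mul_right _ hv
    _ = n ^ (j + 1) := (pow_succ' n j).symm
    _ ≤ n ^ k := Nat.pow_le_pow_right (by omega) hj

section Word

variable (k n) [NeZero k] [NeZero n]

def letterAt : ℕ → Letter k n
  | 0 => .start
  | q + 1 =>
    if h : q % (2 * k) < k then .digit ⟨q % (2 * k), h⟩ (digitOf n (q % (2 * k)) (q / (2 * k)))
    else
      .carry ⟨q % (2 * k) - k, by
          have := Nat.mod_lt q (Nat.mul_pos two_pos (NeZero.pos k)); omega⟩
        (digitOf n (q % (2 * k) - k) (q / (2 * k))) (flag n k (q % (2 * k) - k) (q / (2 * k)))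

def word : List (Letter k n) := (List.range (2 * k * n ^ k + 1)).map (letterAt k n)

variable {k n}

theorem letterAt_digit (t : ℕ) (j : Fin k) :
    letterAt k n (2 * k * t + j + 1) = .digit j (digitOf n j t) := by
  have hmod : (2 * k * t + j) % (2 * k) = j := by
    rw [Nat.add_comm, Nat.add_mul_mod_self_left, Nat.mod_eq_of_lt (by omega)]
  have hdiv : (2 * k * t + j) / (2 * k) = t := by
    rw [Nat.add_comm, Nat.add_mul_div_left _ _ (by have := NeZero.pos k; omega),
      Nat.div_eq_of_lt (by omega), Nat.zero_add]
  simp only [letterAt, hmod, hdiv, dif_pos j.isLt]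

theorem letterAt_carry (t : ℕ) (j : Fin k) :
    letterAt k n (2 * k * t + k + j + 1) = .carry j (digitOf n j t) (flag n k j t) := by
  have hmod : (2 * k * t + k + j) % (2 * k) = k + j := by
    rw [Nat.add_assoc, Nat.add_comm, Nat.add_mul_mod_self_left, Nat.mod_eq_of_lt (by omega)]
  have hdiv : (2 * k * t + k + j) / (2 * k) = t := by
    rw [Nat.add_assoc, Nat.add_comm, Nat.add_mul_div_left _ _ (by have := NeZero.pos k; omega),
      Nat.div_eq_of_lt (by omega), Nat.zero_add]
  simp only [letterAt, hmod, hdiv, dif_neg (show ¬ k + (j : ℕ) < k by omega),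
    Nat.add_sub_cancel_left]

theorem exists_eq_slot (q : ℕ) :
    q = 0 ∨ ∃ t, ∃ j : Fin k, q = 2 * k * t + j + 1 ∨ q = 2 * k * t + k + j + 1 := by
  rcases q with _ | q
  · exact .inl rfl
  have hdm := Nat.div_add_mod q (2 * k)
  have hlt := Nat.mod_lt q (Nat.mul_pos two_pos (NeZero.pos k))
  refine .inr ⟨q / (2 * k), ?_⟩
  rcases Nat.lt_or_ge (q % (2 * k)) k with h | h
  · exact ⟨⟨q % (2 * k), h⟩, .inl (by simp only; omega)⟩
  · exact ⟨⟨q % (2 * k) - k, by omega⟩, .inr (by simp only; omega)⟩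

theorem letterAt_eq_start_iff {q : ℕ} : letterAt k n q = .start ↔ q = 0 := by
  refine ⟨fun h => ?_, fun h => h ▸ rfl⟩
  rcases exists_eq_slot (k := k) q with rfl | ⟨t, j, rfl | rfl⟩
  · rfl
  · simp [letterAt_digit] at h
  · simp [letterAt_carry] at h

theorem modEq_phase_letterAt (q : ℕ) : q ≡ phase (letterAt k n q) [MOD 2 * k] := by
  rcases exists_eq_slot (k := k) q with rfl | ⟨t, j, rfl | rfl⟩
  · rfl
  · simp only [letterAt_digit, phase]
    exact ((Nat.modEq_iff_dvd' (by omega)).mpr ⟨t, by omega⟩).symm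
  · simp only [letterAt_carry, phase]
    exact ((Nat.modEq_iff_dvd' (by omega)).mpr ⟨t, by omega⟩).symm

theorem getElem?_word {q : ℕ} {σ : Letter k n} :
    (word k n)[q]? = some σ ↔ q ≤ 2 * k * n ^ k ∧ letterAt k n q = σ := by
  rw [word, List.getElem?_map]
  by_cases hq : q < 2 * k * n ^ k + 1
  · rw [List.getElem?_range hq]
    simp only [Option.map_some, Option.some.injEq]
    exact ⟨fun h => ⟨by omega, h⟩, fun h => h.2⟩
  · rw [List.getElem?_eq_none (by simp only [List.length_range]; omega)]
    simp only [Option.map_none, reduceCtorEq, false_iff, not_and]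
    omega

theorem modEq_phase_of_getElem?_word {q : ℕ} {σ : Letter k n} (h : (word k n)[q]? = some σ) :
    q ≡ phase σ [MOD 2 * k] :=
  getElem?_word.mp h |>.2 ▸ modEq_phase_letterAt q

theorem letterAt_eq_step {q : ℕ} (hq : k < q) :
    letterAt k n q = step n (letterAt k n (q - k)) (letterAt k n (q - 1)) := by
  rcases exists_eq_slot (k := k) q with rfl | ⟨t, j, rfl | rfl⟩
  · omega
  · rcases t with _ | t
    · simp at hq
      omega
    have hprev : 2 * k * (t + 1) + j + 1 - k = 2 * k * t + k + j + 1 := by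
      rw [Nat.mul_succ]; omega
    rw [hprev, letterAt_carry, letterAt_digit, step, decide_eq_zero_or_flag, ← digitOf_succ]
  · rw [show 2 * k * t + k + j + 1 - k = 2 * k * t + j + 1 by omega, letterAt_digit,
      letterAt_carry, step]
    congr 1
    obtain ⟨_ | i, hj⟩ := j
    · rw [show 2 * k * t + k + ((⟨0, hj⟩ : Fin k) : ℕ) + 1 - 1
          = 2 * k * t + ((⟨k - 1, by omega⟩ : Fin k) : ℕ) + 1 by simp only; omega,
        letterAt_digit]
      simp [flag, carryOut]
    · rw [show 2 * k * t + k + ((⟨i + 1, hj⟩ : Fin k) : ℕ) + 1 - 1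
          = 2 * k * t + k + ((⟨i, by omega⟩ : Fin k) : ℕ) + 1 by simp only; omega,
        letterAt_carry]
      simp only [carryOut, decide_eq_zero_or_flag]
      simp only [flag, Nat.add_one_ne_zero, if_false, pow_succ_dvd_succ_iff, Bool.decide_and]

theorem lt_of_letterAt_eq_carry {q : ℕ} {j : Fin k} {v : Fin n} {c : Bool}
    (h : letterAt k n q = .carry j v c) : k < q := by
  rcases exists_eq_slot (k := k) q with rfl | ⟨t, i, rfl | rfl⟩
  · simp [letterAt] at h
  · simp [letterAt_digit] at h
  · omega

theorem getElem?_word_of_seqArc {p : ℕ} (hkp : k < p) (hp : p ≤ 2 * k * n ^ k)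
    {a a' b : Letter k n} (ha : (word k n)[p - k]? = some a)
    (ha' : (word k n)[p - 1]? = some a') (h : seqArc (k + 1) (word k n) a b)
    (h' : seqArc (k + 1) (word k n) a' b) : (word k n)[p]? = some b := by
  obtain ⟨⟨j, hja, hjb⟩, ⟨j', hja', hjb'⟩⟩ :=
    exists_offsets_of_seqArc phase (fun _ _ => modEq_phase_of_getElem?_word) (NeZero.pos k) hkp.le
      ha ha' h h'
  rw [getElem?_word] at ha ha' hja hjb hja' hjb'
  obtain ⟨-, rfl⟩ := ha
  obtain ⟨-, rfl⟩ := ha'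
  have hkj : k < j := by
    by_contra hjk
    have hstart : letterAt k n (p - k) = .start := by rw [← hja.2, show j - k = 0 by omega]; rfl
    have := letterAt_eq_start_iff.mp hstart
    omega
  have hb : step n (letterAt k n (p - k)) (letterAt k n (j - 1)) = b := by
    rw [← hja.2, ← letterAt_eq_step hkj, hjb.2]
  refine getElem?_word.mpr ⟨hp, ?_⟩
  rw [letterAt_eq_step hkp]
  cases b with
  | start => exact absurd (letterAt_eq_start_iff.mp hjb.2) (by omega)
  | digit => exact step_eq_digit_congr hb
  | carry =>
    have hb' := letterAt_eq_step (n := n) (lt_of_letterAt_eq_carry hjb'.2)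
    rw [hjb'.2, hja'.2] at hb'
    exact (step_right_eq_of_step_eq (hb.trans hb')).trans hb

theorem letterAt_first_block (i : Fin k) : letterAt k n (i + 1) = .digit i 0 := by
  have h := letterAt_digit (n := n) 0 i
  rw [Nat.mul_zero, Nat.zero_add] at h
  rw [h]
  congr
  simp [digitOf]

theorem not_seqArc_start {w : ℕ} {a : Letter k n} : ¬ seqArc w (word k n) a .start := by
  rintro ⟨i, j, hij, -, -, hj⟩
  have := letterAt_eq_start_iff.mp (getElem?_word.mp hj).2
  omega

theorem exists_eq_digit_of_seqArc_start {b : Letter k n}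
    (h : seqArc (k + 1) (word k n) .start b) : ∃ j : Fin k, b = .digit j 0 := by
  obtain ⟨i, j, hij, hji, hi, hj⟩ := h
  obtain rfl := letterAt_eq_start_iff.mp (getElem?_word.mp hi).2
  obtain ⟨j, rfl⟩ : ∃ j', j = j' + 1 := ⟨j - 1, by omega⟩
  exact ⟨⟨j, by omega⟩,
    (getElem?_word.mp hj).2.symm.trans (letterAt_first_block ⟨j, by omega⟩)⟩

theorem lt_of_seqArc_digit {i j : Fin k} {u v : Fin n}
    (h : seqArc (k + 1) (word k n) (.digit i u) (.digit j v)) : i < j := by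
  obtain ⟨p, q, hpq, hqp, hp, hq⟩ := h
  have hp' := (modEq_phase_of_getElem?_word hp).symm.add_right (q - p)
  rw [Nat.add_sub_cancel' hpq.le] at hp'
  have hsum : (i : ℕ) + (q - p) + 1 ≡ j + 1 [MOD 2 * k] := by
    rw [Nat.add_right_comm]
    exact hp'.trans (modEq_phase_of_getElem?_word hq)
  have := (Nat.ModEq.add_right_cancel' 1 hsum).eq_of_lt_of_lt (by omega) (by omega)
  exact Fin.lt_def.mpr (by omega)

theorem getElem?_zero_of_isRealizationD {y : List (Letter k n)}
    (hy : IsRealizationD (k + 1) (seqArc (k + 1) (word k n)) y) : y[0]? = some .start := by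
  obtain ⟨q, hq⟩ := List.mem_iff_getElem?.mp (hy.2.1 .start)
  rcases q with _ | q
  · exact hq
  obtain ⟨hq1, -⟩ := List.getElem?_eq_some_iff.mp hq
  have hq' := List.getElem?_eq_getElem (l := y) (i := q) (by omega)
  have := NeZero.pos k
  exact absurd ((hy.2.2 _ _).mpr ⟨q, q + 1, by omega, by omega, hq', hq⟩) not_seqArc_start

theorem getElem?_eq_of_le_of_isRealizationD {y : List (Letter k n)}
    (hy : IsRealizationD (k + 1) (seqArc (k + 1) (word k n)) y) {p : ℕ} (hp : p ≤ k) :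
    y[p]? = (word k n)[p]? := by
  have harc a b : seqArc (k + 1) y a b → seqArc (k + 1) (word k n) a b := (hy.2.2 a b).mpr
  have hn := NeZero.one_le (n := n)
  have hlen : k < y.length := by
    have := hy.card_le_length
    rw [Letter.card] at this
    nlinarith
  have h0 := getElem?_zero_of_isRealizationD hy
  have hdigit (i : Fin k) : ∃ j : Fin k, y[(i : ℕ) + 1]? = some (.digit j 0) := by
    have hi := List.getElem?_eq_getElem (l := y) (i := i + 1) (by omega)
    obtain ⟨j, hj⟩ := exists_eq_digit_of_seqArc_start
      (harc _ _ ⟨0, i + 1, by omega, by omega, h0, hi⟩)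
    exact ⟨j, hi.trans (congrArg some hj)⟩
  choose f hf using hdigit
  have hf_id : f = id := StrictMono.eq_id fun i i' hii' => lt_of_seqArc_digit
    (harc _ _ ⟨i + 1, i' + 1, by simpa using hii', by omega, hf i, hf i'⟩)
  have hk : k ≤ 2 * k * n ^ k := by nlinarith [Nat.one_le_pow k n (NeZero.pos n)]
  rcases p with _ | p
  · rw [h0]
    exact (getElem?_word.mpr ⟨Nat.zero_le _, rfl⟩).symm
  · rw [show p + 1 = ((⟨p, by omega⟩ : Fin k) : ℕ) + 1 from rfl, hf, hf_id]
    exact (getElem?_word.mpr ⟨by omega, letterAt_first_block _⟩).symm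

theorem eq_of_letterAt_eq_last (hk : 2 ≤ k) {q : ℕ} (hq : q ≤ 2 * k * n ^ k)
    (h : letterAt k n q = letterAt k n (2 * k * n ^ k)) : q = 2 * k * n ^ k := by
  have hpow := Nat.one_le_pow k n (NeZero.pos n)
  have hlast :
      2 * k * n ^ k = 2 * k * (n ^ k - 1) + k + ((⟨k - 1, by omega⟩ : Fin k) : ℕ) + 1 := by
    simp only
    rw [Nat.mul_sub_one]
    have : 2 * k ≤ 2 * k * n ^ k := Nat.le_mul_of_pos_right _ hpow
    omega
  rw [hlast, letterAt_carry] at h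
  rcases exists_eq_slot (k := k) q with rfl | ⟨t, j, rfl | rfl⟩
  · simp [letterAt] at h
  · simp [letterAt_digit] at h
  rw [letterAt_carry, Letter.carry.injEq] at h
  obtain ⟨hj, hd, hc⟩ := h
  have hj : (j : ℕ) = k - 1 := congrArg Fin.val hj
  simp only [hj] at hd hc hq ⊢
  have hsucc : n ^ k - 1 + 1 = n ^ k := Nat.sub_add_cancel hpow
  have hkk : k - 1 + 1 = k := by omega
  have hlast_digit := ((pow_succ_dvd_succ_iff n (k - 1) (n ^ k - 1)).mp
    (by rw [hsucc, hkk])).2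
  simp only [flag, show k - 1 ≠ 0 by omega, if_false, hsucc,
    pow_dvd_pow n (Nat.sub_le k 1), decide_true, decide_eq_true_eq] at hc
  have hdvd := (pow_succ_dvd_succ_iff n (k - 1) t).mpr ⟨hc, by rw [hd, hlast_digit]⟩
  rw [hkk] at hdvd
  have := Nat.mul_le_mul_left (2 * k) (Nat.le_of_dvd (by omega) hdvd)
  rw [Nat.mul_succ] at this
  omega

theorem lt_length_of_isRealizationD (hk : 2 ≤ k) {y : List (Letter k n)}
    (hy : IsRealizationD (k + 1) (seqArc (k + 1) (word k n)) y) : 2 * k * n ^ k < y.length := by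
  have hforced := getElem?_eq_of_arcs_determine (P := 2 * k * n ^ k) (NeZero.pos k)
    (fun a b => (hy.2.2 a b).mpr) (fun _ hp _ => getElem?_eq_of_le_of_isRealizationD hy hp)
    (fun _ hkp hp _ _ _ => getElem?_word_of_seqArc hkp hp)
  obtain ⟨q, hq⟩ := List.mem_iff_getElem?.mp (hy.2.1 (letterAt k n (2 * k * n ^ k)))
  obtain ⟨hqy, -⟩ := List.getElem?_eq_some_iff.mp hq
  by_contra hlen
  obtain ⟨hq', hlast⟩ := getElem?_word.mp ((hforced q (by omega) hqy).symm.trans hq)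
  have := eq_of_letterAt_eq_last hk hq' hlast
  omega

theorem mem_word_of_lt {t : ℕ} (ht : t < n ^ k) (j : Fin k) :
    Letter.digit j (digitOf n j t) ∈ word k n ∧
      Letter.carry j (digitOf n j t) (flag n k j t) ∈ word k n := by
  have hpos : 2 * k * t + k + j + 1 ≤ 2 * k * n ^ k := by
    have := Nat.mul_le_mul_left (2 * k) (Nat.succ_le_of_lt ht)
    rw [Nat.mul_succ] at this
    omega
  exact ⟨List.mem_iff_getElem?.mpr ⟨_, getElem?_word.mpr ⟨by omega, letterAt_digit t j⟩⟩,
    List.mem_iff_getElem?.mpr ⟨_, getElem?_word.mpr ⟨hpos, letterAt_carry t j⟩⟩⟩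

theorem digit_mem_word (j : Fin k) (v : Fin n) : Letter.digit j v ∈ word k n := by
  have h := (mem_word_of_lt (mul_pow_add_lt_pow v.isLt j.isLt (pow_pos (NeZero.pos n) j)) j).1
  rwa [digitOf_mul_add n (pow_pos (NeZero.pos n) j), Fin.ofNat_val_eq_self] at h

theorem carry_mem_word_of_ne_zero (hn : 2 ≤ n) {j : Fin k} (hj : (j : ℕ) ≠ 0) (v : Fin n)
    (c : Bool) : Letter.carry j v c ∈ word k n := by
  have hpow : n ≤ n ^ (j : ℕ) := Nat.le_self_pow hj n
  set r := if c then n ^ (j : ℕ) - 1 else 0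
  have hr : r < n ^ (j : ℕ) := by cases c <;> simp [r] <;> omega
  have h := (mem_word_of_lt (mul_pow_add_lt_pow v.isLt j.isLt hr) j).2
  rw [digitOf_mul_add n hr, Fin.ofNat_val_eq_self] at h
  convert h using 2
  simp only [flag, if_neg hj, Nat.add_assoc, Nat.dvd_add_right (Nat.dvd_mul_left _ _)]
  cases c
  · have : ¬ n ^ (j : ℕ) ∣ 1 := fun h => by have := Nat.le_of_dvd one_pos h; omega
    simp [r, this]
  · simp [r, Nat.sub_add_cancel (show 1 ≤ n ^ (j : ℕ) by omega)]

theorem carry_mem_word_of_eq_zero (hn : 2 ≤ n) (hk : 2 ≤ k) {j : Fin k} (hj : (j : ℕ) = 0)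
    (v : Fin n) (c : Bool) : Letter.carry j v c ∈ word k n := by
  have hpow : n ≤ n ^ (k - 1) := Nat.le_self_pow (by omega) n
  set e := if c then 0 else 1
  have he : e < n := by cases c <;> simp [e] <;> omega
  have hlt := mul_pow_add_lt_pow (k := k) he (by omega : k - 1 < k) (lt_of_lt_of_le v.isLt hpow)
  have h := (mem_word_of_lt hlt j).2
  convert h using 1
  obtain ⟨m, hm⟩ : n ∣ e * n ^ (k - 1) :=
    Dvd.dvd.mul_left (dvd_pow_self n (by omega)) e
  congr 1
  · ext
    simp [digitOf, hj, hm, Nat.mod_eq_of_lt v.isLt]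
  · simp only [flag, hj, if_true, digitOf_mul_add n (lt_of_lt_of_le v.isLt hpow)]
    cases c <;> simp [e, Fin.ext_iff, Nat.mod_eq_of_lt (show 1 < n by omega)]

theorem mem_word (hn : 2 ≤ n) (hk : 2 ≤ k) (σ : Letter k n) : σ ∈ word k n := by
  cases σ with
  | start => exact List.mem_iff_getElem?.mpr ⟨0, getElem?_word.mpr ⟨Nat.zero_le _, rfl⟩⟩
  | digit j v => exact digit_mem_word j v
  | carry j v c =>
    by_cases hj : (j : ℕ) = 0
    · exact carry_mem_word_of_eq_zero hn hk hj v c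
    · exact carry_mem_word_of_ne_zero hn hj v c

theorem isRealizationD_word (hn : 2 ≤ n) (hk : 2 ≤ k) :
    IsRealizationD (k + 1) (seqArc (k + 1) (word k n)) (word k n) :=
  isRealizationD_seqArc (List.ne_nil_of_mem (mem_word hn hk .start)) (mem_word hn hk)

end Word

theorem exists_adj_lt_length {k n : ℕ} (hn : 2 ≤ n) (hk : 2 ≤ k) :
    ∃ Adj : Fin (3 * k * n + 1) → Fin (3 * k * n + 1) → Prop,
      (∃ x, IsRealizationD (k + 1) Adj x) ∧
        ∀ x, IsRealizationD (k + 1) Adj x → 2 * k * n ^ k < x.length := by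
  have : NeZero k := ⟨by omega⟩
  have : NeZero n := ⟨by omega⟩
  let e := Fintype.equivFinOfCardEq (Letter.card (k := k) (n := n))
  refine ⟨fun a b => seqArc (k + 1) (word k n) (e.symm a) (e.symm b),
    ⟨_, (isRealizationD_word hn hk).map_equiv e⟩, fun y hy => ?_⟩
  have := lt_length_of_isRealizationD hk (by simpa using hy.map_equiv e.symm)
  rwa [List.length_map] at this

end CounterWord

theorem stmt16_general (n k : ℕ) :
    ∃ Adj : Fin (3 * k * n + 1) → Fin (3 * k * n + 1) → Prop,
      (∃ x : List (Fin (3 * k * n + 1)), IsRealizationD (k + 1) Adj x) ∧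
      ∀ x : List (Fin (3 * k * n + 1)), IsRealizationD (k + 1) Adj x →
        2 * k * n ^ k ≤ x.length := by
  by_cases h : 2 ≤ n ∧ 2 ≤ k
  · obtain ⟨Adj, hx, hlen⟩ := CounterWord.exists_adj_lt_length h.1 h.2
    exact ⟨Adj, hx, fun x hx => (hlen x hx).le⟩
  have hsmall : 2 * k * n ^ k ≤ 3 * k * n + 1 := by
    rcases Nat.lt_or_ge n 2 with hn | hn
    · interval_cases n
      · rcases k with _ | k <;> simp
      · simp only [one_pow]; omega
    · obtain rfl | rfl : k = 0 ∨ k = 1 := by omega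
      · simp
      · simp only [pow_one]; omega
  refine ⟨seqArc (k + 1) (List.finRange _),
    ⟨_, isRealizationD_seqArc (by simp) (List.mem_finRange)⟩, fun x hx => ?_⟩
  have := hx.card_le_length
  rw [Fintype.card_fin] at this
  omega

theorem stmt16 (n k : ℕ) (hn : 0 < n) (hk : 0 < k) :
    ∃ Adj : Fin (3 * k * n + 1) → Fin (3 * k * n + 1) → Prop,
      (∃ x : List (Fin (3 * k * n + 1)), IsRealizationD (k + 1) Adj x) ∧
      ∀ x : List (Fin (3 * k * n + 1)), IsRealizationD (k + 1) Adj x →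
        2 * k * n ^ k ≤ x.length :=
  stmt16_general n k
end
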